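/- arXiv:1810.01778 — 5 statements merged into one kernel-verified Lean document; each statement's English description precedes it below -/
import Mathlib

section
/- Let f be a probability density on (0,∞) such that f(x) ~ C x^η e^{-ζ x} as x → ∞ for constants C > 0, ζ ≥ 0, and η ∈ ℝ (with η < -1 when ζ = 0). Fix λ > 0 and define the mixed Poisson probabilities π_k = ∫₀^∞ ((λx)^k e^{-λx} / k!) f(x) dx. Then π_k ~ (C/(λ+ζ)^{η+1}) (λ/(λ+ζ))^k k^η as k → ∞. -/
/-!
Put `g x = C * x ^ η * exp (-ζ * x)`. Against `g` the mixed Poisson integral is a Gamma integral,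
`∫ (λx)^k e^{-λx}/k! g(x) dx = C λ^k Γ(k+η+1) / (k! (λ+ζ)^{k+η+1})`, and this is asymptotic to
the claimed expression because `Γ(k+1+η) ~ k! k^η` (Euler's limit formula for `η > 0`, then
`Γ(x+1) = x Γ(x)` to lower `η`). Replacing `g` by `f ~ g` costs a relative error `ε` on `(M, ∞)`,
while both integrals over `(0, M]` are `O((λM)^k/k!)`, and the factorial makes this negligible
against `(λ/(λ+ζ))^k k^η`.
-/

open Filter Topology MeasureTheory Asymptotics Real Set
open scoped Nat

namespace Real

theorem Gamma_add_natCast_add_one_eq_mul_prod {s : ℝ} (hs : 0 < s) (n : ℕ) :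
    Gamma (s + n + 1) = Gamma s * ∏ j ∈ Finset.range (n + 1), (s + j) := by
  induction n with
  | zero => simp [Gamma_add_one hs.ne', mul_comm]
  | succ n ih =>
    rw [Nat.cast_succ, ← add_assoc, Gamma_add_one (by positivity), ih,
      Finset.prod_range_succ _ (n + 1)]
    push_cast
    ring

theorem tendsto_Gamma_add_div_factorial_mul_rpow_of_pos {a : ℝ} (ha : 0 < a) :
    Tendsto (fun n : ℕ => Gamma (n + 1 + a) / (n ! * (n : ℝ) ^ a)) atTop (𝓝 1) := by
  have hΓ := (Gamma_pos_of_pos ha).ne'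
  have h := (tendsto_const_nhds (x := Gamma a)).div (GammaSeq_tendsto_Gamma a) hΓ
  rw [div_self hΓ] at h
  refine h.congr fun n => ?_
  rw [Pi.div_apply, GammaSeq, div_div_eq_mul_div, ← Gamma_add_natCast_add_one_eq_mul_prod ha,
    mul_comm]
  ring_nf

theorem tendsto_Gamma_add_div_factorial_mul_rpow_sub_one {a : ℝ}
    (h : Tendsto (fun n : ℕ => Gamma (n + 1 + a) / (n ! * (n : ℝ) ^ a)) atTop (𝓝 1)) :
    Tendsto (fun n : ℕ => Gamma (n + 1 + (a - 1)) / (n ! * (n : ℝ) ^ (a - 1))) atTop (𝓝 1) := by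
  have h' := (tendsto_natCast_div_add_atTop a).mul h
  rw [one_mul] at h'
  refine h'.congr' ?_
  filter_upwards [eventually_gt_atTop 0,
    tendsto_natCast_atTop_atTop.eventually_gt_atTop (-a)] with n hn hna
  have hn' : (0 : ℝ) < n := Nat.cast_pos.2 hn
  have hna' : (n : ℝ) + a ≠ 0 := by linarith
  rw [show (n : ℝ) + 1 + a = n + a + 1 by ring, Gamma_add_one hna',
    show (n : ℝ) + 1 + (a - 1) = n + a by ring, rpow_sub_one hn'.ne']
  field_simp

theorem tendsto_Gamma_add_div_factorial_mul_rpow (a : ℝ) :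
    Tendsto (fun n : ℕ => Gamma (n + 1 + a) / (n ! * (n : ℝ) ^ a)) atTop (𝓝 1) := by
  obtain ⟨m, hm⟩ := exists_nat_gt (-a)
  induction m generalizing a with
  | zero => exact tendsto_Gamma_add_div_factorial_mul_rpow_of_pos (by simpa using hm)
  | succ m ih =>
    simpa using
      tendsto_Gamma_add_div_factorial_mul_rpow_sub_one (ih (a + 1) (by push_cast at hm; linarith))

end Real

theorem tendsto_pow_mul_rpow_div_factorial_atTop (c s : ℝ) :
    Tendsto (fun k : ℕ => c ^ k * (k : ℝ) ^ s / k !) atTop (𝓝 0) := by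
  have h := (FloorSemiring.tendsto_pow_div_factorial_atTop (c * exp 1)).mul
    ((tendsto_rpow_mul_exp_neg_mul_atTop_nhds_zero s 1 one_pos).comp tendsto_natCast_atTop_atTop)
  rw [zero_mul] at h
  refine h.congr fun k => ?_
  rw [Function.comp_apply, mul_pow, ← exp_nat_mul, mul_one, neg_mul, one_mul, exp_neg]
  field_simp

theorem isLittleO_pow_div_factorial_const_mul_pow_mul_rpow (c : ℝ) {A q : ℝ} (hA : A ≠ 0)
    (hq : q ≠ 0) (s : ℝ) :
    (fun k : ℕ => c ^ k / k !) =o[atTop] fun k => A * q ^ k * (k : ℝ) ^ s := by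
  have hne : ∀ᶠ k : ℕ in atTop, A * q ^ k * (k : ℝ) ^ s ≠ 0 := by
    filter_upwards [eventually_gt_atTop 0] with k hk
    exact mul_ne_zero (mul_ne_zero hA (pow_ne_zero k hq))
      (rpow_pos_of_pos (Nat.cast_pos.2 hk) s).ne'
  rw [isLittleO_iff_tendsto' (hne.mono fun k hk h => absurd h hk)]
  have h := (tendsto_pow_mul_rpow_div_factorial_atTop (c / q) (-s)).const_mul A⁻¹
  rw [mul_zero] at h
  refine h.congr' ?_
  filter_upwards [eventually_gt_atTop 0] with k hk
  have hk' : (0 : ℝ) < k := Nat.cast_pos.2 hk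
  rw [rpow_neg hk'.le, div_pow]
  field_simp

theorem abs_setIntegral_mul_sub_setIntegral_mul_le {α : Type*} [MeasurableSpace α]
    {μ : Measure α} {s : Set α} {ρ u v : α → ℝ} {ε : ℝ} (hs : MeasurableSet s)
    (hρ : ∀ x ∈ s, 0 ≤ ρ x) (hu : IntegrableOn (fun x => ρ x * u x) s μ)
    (hv : IntegrableOn (fun x => ρ x * v x) s μ) (huv : ∀ x ∈ s, |u x - v x| ≤ ε * v x) :
    |∫ x in s, ρ x * u x ∂μ - ∫ x in s, ρ x * v x ∂μ| ≤ ε * ∫ x in s, ρ x * v x ∂μ := by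
  rw [← integral_sub hu hv, ← integral_const_mul, ← Real.norm_eq_abs]
  refine norm_integral_le_of_norm_le (hv.const_mul ε)
    (ae_restrict_of_forall_mem hs fun x hx => ?_)
  rw [Real.norm_eq_abs, ← mul_sub, abs_mul, abs_of_nonneg (hρ x hx), mul_left_comm]
  exact mul_le_mul_of_nonneg_left (huv x hx) (hρ x hx)

theorem isBigO_setIntegral_of_norm_le {ι : Type*} {l : Filter ι} {F : ι → ℝ → ℝ} {a : ι → ℝ}
    {w : ℝ → ℝ} {s : Set ℝ} (hs : MeasurableSet s) (hw : IntegrableOn w s)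
    (h : ∀ᶠ i in l, ∀ x ∈ s, ‖F i x‖ ≤ a i * w x) :
    (fun i => ∫ x in s, F i x) =O[l] a := by
  refine IsBigO.of_bound |∫ x in s, w x| ?_
  filter_upwards [h] with i hi
  calc ‖∫ x in s, F i x‖ ≤ ∫ x in s, a i * w x :=
        norm_integral_le_of_norm_le (hw.const_mul _) (ae_restrict_of_forall_mem hs hi)
    _ = a i * ∫ x in s, w x := integral_const_mul _ _
    _ ≤ |∫ x in s, w x| * ‖a i‖ := by
        rw [Real.norm_eq_abs, mul_comm, ← abs_mul]; exact le_abs_self _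

theorem setIntegral_Ioi_eq_Ioc_add_Ioi {f : ℝ → ℝ} {a b : ℝ} (hab : a ≤ b)
    (hf : IntegrableOn f (Ioi a)) :
    ∫ x in Ioi a, f x = (∫ x in Ioc a b, f x) + ∫ x in Ioi b, f x := by
  rw [← Ioc_union_Ioi_eq_Ioi hab]
  exact setIntegral_union (Ioc_disjoint_Ioi le_rfl) measurableSet_Ioi
    (hf.mono_set Ioc_subset_Ioi_self) (hf.mono_set (Ioi_subset_Ioi hab))

theorem isEquivalent_setIntegral_Ioi_of_isEquivalent {ι : Type*} {l : Filter ι}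
    {K : ι → ℝ → ℝ} {u v : ℝ → ℝ} (hK : ∀ i, ∀ x > 0, 0 ≤ K i x) (hv : ∀ x > 0, 0 ≤ v x)
    (huv : u ~[atTop] v)
    (hKu : ∀ᶠ i in l, IntegrableOn (fun x => K i x * u x) (Ioi 0))
    (hKv : ∀ᶠ i in l, IntegrableOn (fun x => K i x * v x) (Ioi 0))
    (hu_loc : ∀ M > 0, (fun i => ∫ x in Ioc 0 M, K i x * u x) =o[l]
      fun i => ∫ x in Ioi 0, K i x * v x)
    (hv_loc : ∀ M > 0, (fun i => ∫ x in Ioc 0 M, K i x * v x) =o[l]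
      fun i => ∫ x in Ioi 0, K i x * v x) :
    (fun i => ∫ x in Ioi 0, K i x * u x) ~[l] fun i => ∫ x in Ioi 0, K i x * v x := by
  refine IsLittleO.isEquivalent (isLittleO_iff.2 fun c hc => ?_)
  obtain ⟨M₀, hM₀⟩ := eventually_atTop.1 (huv.isLittleO.bound (half_pos hc))
  set M := max M₀ 1
  have hM : 0 < M := lt_max_of_lt_right one_pos
  filter_upwards [hKu, hKv, ((hu_loc M hM).sub (hv_loc M hM)).bound (half_pos hc)]
    with i hKu hKv hloc
  have hKv_nonneg : ∀ x ∈ Ioi (0 : ℝ), 0 ≤ K i x * v x :=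
    fun x hx => mul_nonneg (hK i x hx) (hv x hx)
  have hT : 0 ≤ ∫ x in Ioi 0, K i x * v x := setIntegral_nonneg measurableSet_Ioi hKv_nonneg
  have htail : |(∫ x in Ioi M, K i x * u x) - ∫ x in Ioi M, K i x * v x| ≤
      c / 2 * ∫ x in Ioi 0, K i x * v x := by
    refine (abs_setIntegral_mul_sub_setIntegral_mul_le (ε := c / 2) measurableSet_Ioi
      (fun x hx => hK i x (hM.trans hx)) (hKu.mono_set (Ioi_subset_Ioi hM.le))
      (hKv.mono_set (Ioi_subset_Ioi hM.le)) fun x hx => ?_).trans ?_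
    · have := hM₀ x ((le_max_left _ _).trans hx.le)
      rwa [Pi.sub_apply, Real.norm_eq_abs, Real.norm_of_nonneg (hv x (hM.trans hx))] at this
    · exact mul_le_mul_of_nonneg_left (setIntegral_mono_set hKv
        (ae_restrict_of_forall_mem measurableSet_Ioi hKv_nonneg)
        (Ioi_subset_Ioi hM.le).eventuallyLE) (half_pos hc).le
  rw [Real.norm_eq_abs, Real.norm_of_nonneg hT] at hloc
  have hdiff : (∫ x in Ioi 0, K i x * u x) - ∫ x in Ioi 0, K i x * v x =
      ((∫ x in Ioc 0 M, K i x * u x) - ∫ x in Ioc 0 M, K i x * v x) +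
        ((∫ x in Ioi M, K i x * u x) - ∫ x in Ioi M, K i x * v x) := by
    rw [setIntegral_Ioi_eq_Ioc_add_Ioi hM.le hKu, setIntegral_Ioi_eq_Ioc_add_Ioi hM.le hKv]
    ring
  rw [Pi.sub_apply, hdiff, Real.norm_eq_abs, Real.norm_of_nonneg hT]
  linarith [abs_add_le ((∫ x in Ioc 0 M, K i x * u x) - ∫ x in Ioc 0 M, K i x * v x)
    ((∫ x in Ioi M, K i x * u x) - ∫ x in Ioi M, K i x * v x)]

noncomputable def poissonMass (lam : ℝ) (k : ℕ) (x : ℝ) : ℝ :=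
  (lam * x) ^ k * exp (-(lam * x)) / k !

section PoissonMass

variable {lam x : ℝ} {k : ℕ}

theorem continuous_poissonMass (lam : ℝ) (k : ℕ) : Continuous (poissonMass lam k) := by
  unfold poissonMass; fun_prop

theorem poissonMass_nonneg (hlam : 0 ≤ lam) (hx : 0 ≤ x) : 0 ≤ poissonMass lam k x := by
  unfold poissonMass; positivity

theorem poissonMass_le_one (hlam : 0 ≤ lam) (hx : 0 ≤ x) : poissonMass lam k x ≤ 1 := by
  have h := Real.pow_div_factorial_le_exp (x := lam * x) (mul_nonneg hlam hx) k
  calc poissonMass lam k x = (lam * x) ^ k / k ! * exp (-(lam * x)) := by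
        unfold poissonMass; ring
    _ ≤ exp (lam * x) * exp (-(lam * x)) := by gcongr
    _ = 1 := by rw [← exp_add, add_neg_cancel, exp_zero]

theorem poissonMass_le_pow_div_factorial {M : ℝ} (hlam : 0 ≤ lam) (hx : 0 ≤ x) (hxM : x ≤ M) :
    poissonMass lam k x ≤ (lam * M) ^ k / k ! := by
  have h : exp (-(lam * x)) ≤ 1 := exp_le_one_iff.2 (by nlinarith)
  calc poissonMass lam k x ≤ (lam * x) ^ k * 1 / k ! := by
        unfold poissonMass; gcongr
    _ ≤ (lam * M) ^ k / k ! := by rw [mul_one]; gcongr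

theorem norm_poissonMass_mul_le {M : ℝ} {u : ℝ → ℝ} (hlam : 0 ≤ lam)
    (hu : 0 ≤ u x) (hx : x ∈ Ioc 0 M) :
    ‖poissonMass lam k x * u x‖ ≤ (lam * M) ^ k / k ! * u x := by
  rw [Real.norm_of_nonneg (mul_nonneg (poissonMass_nonneg hlam hx.1.le) hu)]
  exact mul_le_mul_of_nonneg_right (poissonMass_le_pow_div_factorial hlam hx.1.le hx.2) hu

theorem integrableOn_poissonMass_mul {u : ℝ → ℝ} (hlam : 0 ≤ lam)
    (hu : IntegrableOn u (Ioi 0)) :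
    IntegrableOn (fun x => poissonMass lam k x * u x) (Ioi 0) :=
  hu.bdd_mul (continuous_poissonMass lam k).aestronglyMeasurable
    (ae_restrict_of_forall_mem measurableSet_Ioi fun x hx => by
      rw [Real.norm_of_nonneg (poissonMass_nonneg hlam (le_of_lt hx))]
      exact poissonMass_le_one hlam (le_of_lt hx))

theorem poissonMass_mul_rpow_mul_exp (hx : 0 < x) (C η ζ : ℝ) :
    poissonMass lam k x * (C * x ^ η * exp (-ζ * x)) =
      C * lam ^ k / k ! * (x ^ (k + η + 1 - 1) * exp (-((lam + ζ) * x))) := by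
  have h : exp (-((lam + ζ) * x)) = exp (-(lam * x)) * exp (-ζ * x) := by
    rw [← exp_add]; ring_nf
  rw [add_sub_cancel_right, rpow_add hx, rpow_natCast, h, poissonMass, mul_pow]
  ring

variable {C η ζ : ℝ}

theorem integrableOn_poissonMass_mul_rpow_mul_exp (hp : 0 < lam + ζ) (hk : -1 < k + η) :
    IntegrableOn (fun x => poissonMass lam k x * (C * x ^ η * exp (-ζ * x))) (Ioi 0) := by
  refine IntegrableOn.congr_fun ((integrableOn_rpow_mul_exp_neg_mul_rpow
    (by linarith : -1 < (k : ℝ) + η + 1 - 1) one_pos hp).const_mul (C * lam ^ k / k !))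
    (fun x hx => ?_) measurableSet_Ioi
  rw [poissonMass_mul_rpow_mul_exp hx, rpow_one, neg_mul]

theorem integral_poissonMass_mul_rpow_mul_exp (hp : 0 < lam + ζ) (hk : -1 < k + η) :
    ∫ x in Ioi 0, poissonMass lam k x * (C * x ^ η * exp (-ζ * x)) =
      C * lam ^ k / k ! * ((1 / (lam + ζ)) ^ (k + η + 1) * Gamma (k + η + 1)) := by
  rw [setIntegral_congr_fun measurableSet_Ioi fun x hx => poissonMass_mul_rpow_mul_exp hx C η ζ,
    integral_const_mul, integral_rpow_mul_exp_neg_mul_Ioi (by linarith) hp]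

theorem norm_poissonMass_mul_rpow_mul_exp_le {M : ℝ} (hlam : 0 ≤ lam) (hC : 0 ≤ C)
    (hp : 0 ≤ lam + ζ) (hk : 0 ≤ k + η) (hx : x ∈ Ioc 0 M) :
    ‖poissonMass lam k x * (C * x ^ η * exp (-ζ * x))‖ ≤ (lam * M) ^ k / k ! * (C * M ^ η) := by
  have hM : 0 < M := hx.1.trans_le hx.2
  have hg : 0 ≤ C * x ^ η * exp (-ζ * x) := by have := rpow_pos_of_pos hx.1 η; positivity
  rw [Real.norm_of_nonneg (mul_nonneg (poissonMass_nonneg hlam hx.1.le) hg),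
    poissonMass_mul_rpow_mul_exp hx.1, add_sub_cancel_right]
  have h : exp (-((lam + ζ) * x)) ≤ 1 := exp_le_one_iff.2 (by nlinarith [hx.1])
  calc C * lam ^ k / k ! * (x ^ (k + η) * exp (-((lam + ζ) * x)))
      ≤ C * lam ^ k / k ! * (M ^ (k + η) * 1) := by
        gcongr
        exacts [hx.1.le, hx.2]
    _ = (lam * M) ^ k / k ! * (C * M ^ η) := by
        rw [mul_one, rpow_add hM, rpow_natCast, mul_pow]; ring

theorem isBigO_setIntegral_Ioc_poissonMass_mul {M : ℝ} {u : ℝ → ℝ} (hlam : 0 ≤ lam)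
    (hu : IntegrableOn u (Ioc 0 M)) (hu_nonneg : ∀ x ∈ Ioc 0 M, 0 ≤ u x) :
    (fun k : ℕ => ∫ x in Ioc 0 M, poissonMass lam k x * u x) =O[atTop]
      fun k => (lam * M) ^ k / k ! :=
  isBigO_setIntegral_of_norm_le (F := fun k x => poissonMass lam k x * u x) measurableSet_Ioc hu
    (.of_forall fun _ x hx => norm_poissonMass_mul_le hlam (hu_nonneg x hx) hx)

theorem isBigO_setIntegral_Ioc_poissonMass_mul_rpow_mul_exp {M : ℝ} (hlam : 0 ≤ lam)
    (hC : 0 ≤ C) (hp : 0 ≤ lam + ζ) :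
    (fun k : ℕ => ∫ x in Ioc 0 M, poissonMass lam k x * (C * x ^ η * exp (-ζ * x))) =O[atTop]
      fun k => (lam * M) ^ k / k ! :=
  isBigO_setIntegral_of_norm_le (F := fun k x => poissonMass lam k x * (C * x ^ η * exp (-ζ * x)))
    measurableSet_Ioc (integrableOn_const measure_Ioc_lt_top.ne)
    ((tendsto_natCast_atTop_atTop.eventually_ge_atTop (-η)).mono fun _ hk _ hx =>
      norm_poissonMass_mul_rpow_mul_exp_le hlam hC hp (by linarith) hx)

theorem isEquivalent_integral_poissonMass_mul_rpow_mul_exp (hC : C ≠ 0) (hlam : lam ≠ 0)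
    (hp : 0 < lam + ζ) :
    (fun k : ℕ => ∫ x in Ioi 0, poissonMass lam k x * (C * x ^ η * exp (-ζ * x))) ~[atTop]
      fun k => C / (lam + ζ) ^ (η + 1) * (lam / (lam + ζ)) ^ k * (k : ℝ) ^ η := by
  refine isEquivalent_of_tendsto_one ((tendsto_Gamma_add_div_factorial_mul_rpow η).congr' ?_)
  filter_upwards [eventually_gt_atTop 0,
    tendsto_natCast_atTop_atTop.eventually_gt_atTop (-1 - η)] with k hk hkη
  have hk' : (0 : ℝ) < k := Nat.cast_pos.2 hk
  rw [Pi.div_apply, integral_poissonMass_mul_rpow_mul_exp hp (by linarith), one_div,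
    inv_rpow hp.le, show (k : ℝ) + η + 1 = k + (η + 1) by ring, rpow_add hp, rpow_natCast,
    show (k : ℝ) + 1 + η = k + (η + 1) by ring, div_pow]
  field_simp

end PoissonMass

theorem mixed_poisson_asymptotics_general
    (f : ℝ → ℝ) (C ζ η lam : ℝ)
    (hC : 0 < C) (hζ : 0 ≤ ζ) (hlam : 0 < lam)
    (hf_nonneg : ∀ x : ℝ, 0 ≤ f x)
    (hf_dens : ∫ x in Set.Ioi (0 : ℝ), f x = 1)
    (hf_asymp : Tendsto (fun x : ℝ => f x / (C * x ^ η * Real.exp (-ζ * x)))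
      atTop (𝓝 1)) :
    Tendsto (fun k : ℕ =>
      (∫ x in Set.Ioi (0 : ℝ),
          (lam * x) ^ k * Real.exp (-(lam * x)) / (Nat.factorial k) * f x) /
        (C / (lam + ζ) ^ (η + 1) * (lam / (lam + ζ)) ^ k * (k : ℝ) ^ η))
      atTop (𝓝 1) := by
  have hp : 0 < lam + ζ := by linarith
  set g : ℝ → ℝ := fun x => C * x ^ η * exp (-ζ * x)
  set T : ℕ → ℝ := fun k => ∫ x in Ioi 0, poissonMass lam k x * g x
  have hg : ∀ x > 0, 0 ≤ g x := fun x hx => by have := rpow_pos_of_pos hx η; positivity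
  have hf : IntegrableOn f (Ioi 0) :=
    Integrable.of_integral_ne_zero (by rw [hf_dens]; exact one_ne_zero)
  have hTD : T ~[atTop] _ := isEquivalent_integral_poissonMass_mul_rpow_mul_exp hC.ne' hlam.ne' hp
  have hsmall (M : ℝ) : (fun k : ℕ => (lam * M) ^ k / k !) =o[atTop] T :=
    (isLittleO_pow_div_factorial_const_mul_pow_mul_rpow _ (by positivity) (by positivity) η
      ).trans_isEquivalent hTD.symm
  have hf_loc (M : ℝ) (_ : 0 < M) :
      (fun k : ℕ => ∫ x in Ioc 0 M, poissonMass lam k x * f x) =o[atTop] T :=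
    (isBigO_setIntegral_Ioc_poissonMass_mul hlam.le (hf.mono_set Ioc_subset_Ioi_self)
      fun x _ => hf_nonneg x).trans_isLittleO (hsmall M)
  have hg_loc (M : ℝ) (_ : 0 < M) :
      (fun k : ℕ => ∫ x in Ioc 0 M, poissonMass lam k x * g x) =o[atTop] T :=
    (isBigO_setIntegral_Ioc_poissonMass_mul_rpow_mul_exp hlam.le hC.le hp.le).trans_isLittleO
      (hsmall M)
  have hSD := (isEquivalent_setIntegral_Ioi_of_isEquivalent (K := poissonMass lam) (v := g)
    (fun k x hx => poissonMass_nonneg hlam.le hx.le) hg (isEquivalent_of_tendsto_one hf_asymp)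
    (.of_forall fun k => integrableOn_poissonMass_mul hlam.le hf)
    ((tendsto_natCast_atTop_atTop.eventually_gt_atTop (-1 - η)).mono fun k hk =>
      integrableOn_poissonMass_mul_rpow_mul_exp hp (by linarith))
    hf_loc hg_loc).trans hTD
  refine (isEquivalent_iff_tendsto_one ?_).1 hSD
  filter_upwards [eventually_gt_atTop 0] with k hk
  have hk' : (0 : ℝ) < k := Nat.cast_pos.2 hk
  positivity

/-- Willmot's theorem (constant slowly varying function case): asymptotics of mixed
Poisson probabilities when the mixing density satisfies f(x) ~ C x^η e^{-ζx}. -/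
theorem mixed_poisson_asymptotics
    (f : ℝ → ℝ) (C ζ η lam : ℝ)
    (hC : 0 < C) (hζ : 0 ≤ ζ) (hη : ζ = 0 → η < -1) (hlam : 0 < lam)
    (hf_nonneg : ∀ x : ℝ, 0 ≤ f x)
    (hf_dens : ∫ x in Set.Ioi (0 : ℝ), f x = 1)
    (hf_asymp : Tendsto (fun x : ℝ => f x / (C * x ^ η * Real.exp (-ζ * x)))
      atTop (𝓝 1)) :
    Tendsto (fun k : ℕ =>
      (∫ x in Set.Ioi (0 : ℝ),
          (lam * x) ^ k * Real.exp (-(lam * x)) / (Nat.factorial k) * f x) /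
        (C / (lam + ζ) ^ (η + 1) * (lam / (lam + ζ)) ^ k * (k : ℝ) ^ η))
      atTop (𝓝 1) :=
  mixed_poisson_asymptotics_general f C ζ η lam hC hζ hlam hf_nonneg hf_dens hf_asymp
end

section
/- Let f be the inverse gamma density with parameters α > 1, β > 0, and π_k = ∫₀^∞ (x^k e^{-x}/k!) f(x) dx. Then π_k ~ (β^α / Γ(α)) k^{-α-1} as k → ∞. -/
open Filter Topology MeasureTheory Set Real

private lemma exp_comb {u v : ℝ} (a b : ℝ) (hu : 0 < u) (hv : 0 < v) :
    Real.exp (a * Real.log u + b * Real.log v) = u ^ a * v ^ b := by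
  rw [Real.exp_add, mul_comm a, mul_comm b, ← Real.rpow_def_of_pos hu,
    ← Real.rpow_def_of_pos hv]

/-- Gautschi-type upper bound from log-convexity. -/
lemma gautschi_upper {x s : ℝ} (hx : 0 < x) (hs0 : 0 ≤ s) (hs1 : s ≤ 1) :
    Real.Gamma (x + s) ≤ Real.Gamma x * x ^ s := by
  have h1 : (0:ℝ) ≤ 1 - s := by linarith
  have hc := Real.convexOn_log_Gamma.2 (Set.mem_Ioi.2 hx)
    (Set.mem_Ioi.2 (by linarith : (0:ℝ) < x + 1)) h1 hs0 (by ring)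
  have hcomb : (1 - s) • x + s • (x + 1) = x + s := by simp [smul_eq_mul]; ring
  rw [hcomb] at hc
  simp only [Function.comp_apply, smul_eq_mul] at hc
  have hgx : 0 < Real.Gamma x := Real.Gamma_pos_of_pos hx
  have hgxs : 0 < Real.Gamma (x + s) := Real.Gamma_pos_of_pos (by linarith)
  have hgx1 : 0 < Real.Gamma (x + 1) := Real.Gamma_pos_of_pos (by linarith)
  have key := Real.exp_le_exp.2 hc
  rw [Real.exp_log hgxs, exp_comb _ _ hgx hgx1] at key
  have h3 : Real.Gamma x ^ (1 - s) * Real.Gamma (x + 1) ^ s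
      = Real.Gamma x * x ^ s := by
    rw [Real.Gamma_add_one hx.ne', Real.mul_rpow (le_of_lt hx) hgx.le,
      ← mul_assoc, mul_comm (Real.Gamma x ^ (1-s)) _, mul_assoc,
      ← Real.rpow_add hgx, sub_add_cancel, Real.rpow_one, mul_comm]
  rw [h3] at key; exact key

/-- Gautschi-type lower bound from log-convexity. -/
lemma gautschi_lower {x s : ℝ} (hx : 0 < x) (hs0 : 0 ≤ s) (hs1 : s ≤ 1) :
    x * Real.Gamma x ≤ (x + s) ^ (1 - s) * Real.Gamma (x + s) := by
  have h1 : (0:ℝ) ≤ 1 - s := by linarith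
  have hxs : 0 < x + s := by linarith
  have hc := Real.convexOn_log_Gamma.2 (Set.mem_Ioi.2 hxs)
    (Set.mem_Ioi.2 (by linarith : (0:ℝ) < x + s + 1)) hs0 h1 (by ring)
  have hcomb : s • (x + s) + (1 - s) • (x + s + 1) = x + 1 := by
    simp [smul_eq_mul]; ring
  rw [hcomb] at hc
  simp only [Function.comp_apply, smul_eq_mul] at hc
  have hgxs : 0 < Real.Gamma (x + s) := Real.Gamma_pos_of_pos hxs
  have hgx1 : 0 < Real.Gamma (x + 1) := Real.Gamma_pos_of_pos (by linarith)
  have hgxs1 : 0 < Real.Gamma (x + s + 1) := Real.Gamma_pos_of_pos (by linarith)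
  have key := Real.exp_le_exp.2 hc
  rw [Real.exp_log hgx1, exp_comb _ _ hgxs hgxs1] at key
  have h3 : Real.Gamma (x + s) ^ s * Real.Gamma (x + s + 1) ^ (1 - s)
      = (x + s) ^ (1 - s) * Real.Gamma (x + s) := by
    rw [Real.Gamma_add_one hxs.ne', Real.mul_rpow hxs.le hgxs.le,
      mul_comm (Real.Gamma (x+s) ^ s) _, mul_assoc, ← Real.rpow_add hgxs,
      sub_add_cancel, Real.rpow_one]
  rw [h3, Real.Gamma_add_one hx.ne'] at key
  exact key

lemma tendsto_one_add_div (c : ℝ) :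
    Tendsto (fun x : ℝ => 1 + c / x) atTop (𝓝 1) := by
  have h : Tendsto (fun x : ℝ => c / x) atTop (𝓝 0) :=
    tendsto_const_nhds.div_atTop tendsto_id
  simpa using (tendsto_const_nhds (x := (1:ℝ))).add h

lemma tendsto_div_add_const (c : ℝ) :
    Tendsto (fun x : ℝ => x / (x + c)) atTop (𝓝 1) := by
  have h2 := (tendsto_one_add_div c).inv₀ one_ne_zero
  rw [inv_one] at h2
  refine h2.congr' ?_
  filter_upwards [eventually_gt_atTop (max 0 (-c))] with x hx
  have hx0 : 0 < x := lt_of_le_of_lt (le_max_left _ _) hx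
  have hxc : 0 < x + c := by have := lt_of_le_of_lt (le_max_right _ _) hx; linarith
  field_simp

lemma gamma_ratio_s {s : ℝ} (hs0 : 0 ≤ s) (hs1 : s ≤ 1) :
    Tendsto (fun x : ℝ => Real.Gamma x / Real.Gamma (x + s) * x ^ s) atTop (𝓝 1) := by
  have hub : Tendsto (fun x : ℝ => (1 + s / x) ^ (1 - s)) atTop (𝓝 1) := by
    have := (tendsto_one_add_div s).rpow_const (p := 1 - s) (Or.inl one_ne_zero)
    simpa using this
  refine tendsto_of_tendsto_of_tendsto_of_le_of_le' tendsto_const_nhds hub ?_ ?_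
  · filter_upwards [eventually_gt_atTop (0:ℝ)] with x hx
    have hgxs : 0 < Real.Gamma (x + s) := Real.Gamma_pos_of_pos (by linarith)
    have h := gautschi_upper hx hs0 hs1
    rw [div_mul_eq_mul_div]
    exact (one_le_div hgxs).2 h
  · filter_upwards [eventually_gt_atTop (0:ℝ)] with x hx
    have hxs : 0 < x + s := by linarith
    have hgxs : 0 < Real.Gamma (x + s) := Real.Gamma_pos_of_pos hxs
    have e1 : 1 + s / x = (x + s) / x := by field_simp
    rw [e1, Real.div_rpow hxs.le hx.le, div_mul_eq_mul_div,
      div_le_div_iff₀ hgxs (Real.rpow_pos_of_pos hx _), mul_assoc,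
      ← Real.rpow_add hx, add_sub_cancel, Real.rpow_one]
    have := gautschi_lower hx hs0 hs1
    linarith [this]

lemma gamma_ratio_sn (s : ℝ) (hs0 : 0 ≤ s) (hs1 : s ≤ 1) (n : ℕ) :
    Tendsto (fun x : ℝ => Real.Gamma x / Real.Gamma (x + (s + n)) * x ^ (s + n))
      atTop (𝓝 1) := by
  induction n with
  | zero => simpa using gamma_ratio_s hs0 hs1
  | succ n ih =>
    have hmul := ih.mul (tendsto_div_add_const (s + n))
    rw [mul_one] at hmul
    refine hmul.congr' ?_
    filter_upwards [eventually_gt_atTop (max 0 (-(s + n)))] with x hx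
    have hx0 : 0 < x := lt_of_le_of_lt (le_max_left _ _) hx
    have hxs : 0 < x + (s + n) := by
      have := lt_of_le_of_lt (le_max_right _ _) hx; linarith
    have hg : 0 < Real.Gamma (x + (s + n)) := Real.Gamma_pos_of_pos hxs
    have hgam : Real.Gamma (x + (s + ↑(n + 1))) = (x + (s + n)) * Real.Gamma (x + (s + n)) := by
      rw [← Real.Gamma_add_one hxs.ne']
      congr 1
      push_cast; ring
    have hpow : x ^ (s + ((n + 1 : ℕ) : ℝ)) = x ^ (s + n) * x := by
      have e : s + ((n + 1 : ℕ) : ℝ) = (s + n) + 1 := by push_cast; ring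
      rw [e, Real.rpow_add_one hx0.ne']
    rw [hgam, hpow]
    field_simp

lemma gamma_ratio_general (a : ℝ) (ha : 0 ≤ a) :
    Tendsto (fun x : ℝ => Real.Gamma x / Real.Gamma (x + a) * x ^ a) atTop (𝓝 1) := by
  have h0 : (0:ℝ) ≤ a - ⌊a⌋₊ := by
    have := Nat.floor_le ha; linarith
  have h1 : a - ⌊a⌋₊ ≤ 1 := by
    have := (Nat.lt_floor_add_one a).le; linarith
  have := gamma_ratio_sn (a - ⌊a⌋₊) h0 h1 ⌊a⌋₊
  simpa [sub_add_cancel] using this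

lemma gamma_ratio_real (α : ℝ) (hα : 1 < α) :
    Tendsto (fun x : ℝ => Real.Gamma (x - α) / Real.Gamma (x + 1) * x ^ (α + 1))
      atTop (𝓝 1) := by
  have ha : (0:ℝ) ≤ α + 1 := by linarith
  have hshift : Tendsto (fun x : ℝ => x - α) atTop atTop := by
    simpa [sub_eq_add_neg] using tendsto_atTop_add_const_right atTop (-α) (tendsto_id (α := ℝ))
  have h1 : Tendsto (fun x : ℝ =>
      Real.Gamma (x - α) / Real.Gamma ((x - α) + (α + 1)) * (x - α) ^ (α + 1))
      atTop (𝓝 1) := (gamma_ratio_general (α + 1) ha).comp hshift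
  have h2 : Tendsto (fun x : ℝ => (x / (x - α)) ^ (α + 1)) atTop (𝓝 1) := by
    have := ((tendsto_div_add_const (-α)).rpow_const (p := α + 1) (Or.inl one_ne_zero))
    simpa [sub_eq_add_neg] using this
  have hmul := h1.mul h2
  rw [mul_one] at hmul
  refine hmul.congr' ?_
  filter_upwards [eventually_gt_atTop (max 0 α)] with x hx
  have hx0 : 0 < x := lt_of_le_of_lt (le_max_left _ _) hx
  have hxα : 0 < x - α := by have := lt_of_le_of_lt (le_max_right _ _) hx; linarith
  have e1 : (x - α) + (α + 1) = x + 1 := by ring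
  rw [e1, mul_assoc, ← Real.mul_rpow hxα.le (by positivity),
    mul_div_cancel₀ _ hxα.ne']

lemma gamma_ratio_nat (α : ℝ) (hα : 1 < α) :
    Tendsto (fun k : ℕ =>
      Real.Gamma ((k:ℝ) - α) / Real.Gamma ((k:ℝ) + 1) * (k:ℝ) ^ (α + 1))
      atTop (𝓝 1) :=
  (gamma_ratio_real α hα).comp tendsto_natCast_atTop_atTop

lemma gamma_ratio_nat' (α : ℝ) (hα : 1 < α) :
    Tendsto (fun k : ℕ =>
      Real.Gamma ((k:ℝ) - α - 1) / Real.Gamma ((k:ℝ) + 1) * (k:ℝ) ^ (α + 1))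
      atTop (𝓝 0) := by
  have hsh : Tendsto (fun k : ℕ => (k:ℝ) - α - 1) atTop atTop := by
    have := tendsto_atTop_add_const_right atTop (-α - 1)
      (tendsto_natCast_atTop_atTop (R := ℝ))
    exact this.congr (fun k => by ring)
  have hinv : Tendsto (fun k : ℕ => ((k:ℝ) - α - 1)⁻¹) atTop (𝓝 0) :=
    tendsto_inv_atTop_zero.comp hsh
  have hmul := (gamma_ratio_nat α hα).mul hinv
  rw [mul_zero] at hmul
  refine hmul.congr' ?_
  filter_upwards [eventually_gt_atTop ⌈α + 2⌉₊] with k hk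
  have hk2 : α + 2 < (k:ℝ) :=
    lt_of_le_of_lt (Nat.le_ceil _) (Nat.cast_lt.2 hk)
  have h1 : (0:ℝ) < (k:ℝ) - α - 1 := by linarith
  have hgam : Real.Gamma ((k:ℝ) - α) = ((k:ℝ) - α - 1) * Real.Gamma ((k:ℝ) - α - 1) := by
    rw [← Real.Gamma_add_one h1.ne']; congr 1; ring
  have hg1 : Real.Gamma ((k:ℝ) + 1) ≠ 0 :=
    (Real.Gamma_pos_of_pos (by positivity)).ne'
  rw [hgam]
  field_simp

lemma Ht_int {t : ℝ} (ht : 0 < t) :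
    IntegrableOn (fun x : ℝ => x ^ (t - 1) * Real.exp (-x)) (Ioi 0) :=
  (Real.GammaIntegral_convergent ht).congr_fun (fun x _ => mul_comm _ _) measurableSet_Ioi

lemma integral_rpow_exp {t : ℝ} (ht : 0 < t) :
    ∫ x in Ioi (0:ℝ), x ^ (t - 1) * Real.exp (-x) = Real.Gamma t := by
  rw [Real.Gamma_eq_integral ht]
  exact setIntegral_congr_fun measurableSet_Ioi (fun x hx => mul_comm _ _)

/-- Asymptotics of the mixed Poisson probabilities with inverse gamma mixing density:
π_k ~ (β^α / Γ(α)) k^{-α-1}. -/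
theorem mixed_poisson_inverse_gamma_asymptotics
    (α β : ℝ) (hα : 1 < α) (hβ : 0 < β) :
    Tendsto (fun k : ℕ =>
      (∫ x in Set.Ioi (0 : ℝ),
          x ^ k * Real.exp (-x) / (Nat.factorial k) *
            (β ^ α / Real.Gamma α * x ^ (-α - 1) * Real.exp (-β / x))) /
        (β ^ α / Real.Gamma α * (k : ℝ) ^ (-α - 1)))
      atTop (𝓝 1) := by
  set C : ℝ := β ^ α / Real.Gamma α with hCdef
  have hC0 : 0 < C := div_pos (Real.rpow_pos_of_pos hβ α)
    (Real.Gamma_pos_of_pos (by linarith))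
  -- limits of the bounding sequences
  have hU : Tendsto (fun k : ℕ =>
      Real.Gamma ((k:ℝ) - α) * ((k:ℝ) ^ (α + 1) / Real.Gamma ((k:ℝ) + 1)))
      atTop (𝓝 1) := by
    refine (gamma_ratio_nat α hα).congr (fun k => ?_)
    ring
  have hL : Tendsto (fun k : ℕ =>
      (Real.Gamma ((k:ℝ) - α) - β * Real.Gamma ((k:ℝ) - α - 1)) *
        ((k:ℝ) ^ (α + 1) / Real.Gamma ((k:ℝ) + 1)))
      atTop (𝓝 1) := by
    have h2 := (gamma_ratio_nat' α hα).const_mul β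
    rw [mul_zero] at h2
    have := (gamma_ratio_nat α hα).sub h2
    rw [sub_zero] at this
    refine this.congr (fun k => ?_)
    ring
  refine tendsto_of_tendsto_of_tendsto_of_le_of_le' hL hU ?_ ?_ <;>
  · filter_upwards [eventually_gt_atTop ⌈α + 2⌉₊] with k hk
    have hk2 : α + 2 < (k:ℝ) :=
      lt_of_le_of_lt (Nat.le_ceil _) (Nat.cast_lt.2 hk)
    have hk0 : (0:ℝ) < (k:ℝ) := by linarith
    have ht1 : (0:ℝ) < (k:ℝ) - α := by linarith
    have ht2 : (0:ℝ) < (k:ℝ) - α - 1 := by linarith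
    have hg1 : (0:ℝ) < Real.Gamma ((k:ℝ) + 1) := Real.Gamma_pos_of_pos (by linarith)
    -- integrability facts
    have hint_H : IntegrableOn (fun x : ℝ => x ^ ((k:ℝ) - α - 1) * Real.exp (-x)) (Ioi 0) :=
      Ht_int ht1
    have hint_H' : IntegrableOn (fun x : ℝ => x ^ ((k:ℝ) - α - 1 - 1) * Real.exp (-x)) (Ioi 0) :=
      Ht_int ht2
    have hmeasG : Measurable (fun x : ℝ =>
        x ^ ((k:ℝ) - α - 1) * Real.exp (-x) * Real.exp (-β / x)) := by
      fun_prop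
    have hint_G : IntegrableOn (fun x : ℝ =>
        x ^ ((k:ℝ) - α - 1) * Real.exp (-x) * Real.exp (-β / x)) (Ioi 0) := by
      refine hint_H.mono' hmeasG.aestronglyMeasurable ?_
      refine (ae_restrict_iff' measurableSet_Ioi).2 (Eventually.of_forall fun x hx => ?_)
      have hx0 : (0:ℝ) < x := hx
      have h1 : (0:ℝ) ≤ x ^ ((k:ℝ) - α - 1) * Real.exp (-x) := by positivity
      rw [Real.norm_eq_abs, abs_of_nonneg (by positivity)]
      exact mul_le_of_le_one_right h1 (Real.exp_le_one_iff.2 (by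
        have : (0:ℝ) ≤ β / x := by positivity
        rw [neg_div]; linarith))
    have hint_L : IntegrableOn (fun x : ℝ =>
        x ^ ((k:ℝ) - α - 1) * Real.exp (-x) -
          β * (x ^ ((k:ℝ) - α - 1 - 1) * Real.exp (-x))) (Ioi 0) :=
      hint_H.sub (hint_H'.const_mul β)
    -- the integral identity
    have hF_eq : (∫ x in Set.Ioi (0 : ℝ),
          x ^ k * Real.exp (-x) / (Nat.factorial k) *
            (C * x ^ (-α - 1) * Real.exp (-β / x)))
        = C / (Nat.factorial k) *
          ∫ x in Ioi (0:ℝ), x ^ ((k:ℝ) - α - 1) * Real.exp (-x) * Real.exp (-β / x) := by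
      rw [← integral_const_mul]
      refine setIntegral_congr_fun measurableSet_Ioi (fun x hx => ?_)
      have hx0 : (0:ℝ) < x := hx
      have hxk : (x:ℝ) ^ k = x ^ ((k:ℝ)) := (Real.rpow_natCast x k).symm
      have hmul : x ^ ((k:ℝ)) * x ^ (-α - 1) = x ^ ((k:ℝ) - α - 1) := by
        rw [← Real.rpow_add hx0]; congr 1; ring
      calc x ^ k * Real.exp (-x) / (Nat.factorial k) * (C * x ^ (-α - 1) * Real.exp (-β / x))
          = C / (Nat.factorial k) *
            (x ^ ((k:ℝ)) * x ^ (-α - 1) * (Real.exp (-x) * Real.exp (-β / x))) := by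
            rw [hxk]; ring
        _ = C / (Nat.factorial k) *
            (x ^ ((k:ℝ) - α - 1) * Real.exp (-x) * Real.exp (-β / x)) := by
            rw [hmul]; ring
    -- bounds on the inner integral
    have hub : (∫ x in Ioi (0:ℝ), x ^ ((k:ℝ) - α - 1) * Real.exp (-x) * Real.exp (-β / x))
        ≤ Real.Gamma ((k:ℝ) - α) := by
      rw [← integral_rpow_exp ht1]
      refine setIntegral_mono_on hint_G hint_H measurableSet_Ioi (fun x hx => ?_)
      have hx0 : (0:ℝ) < x := hx
      have h1 : (0:ℝ) ≤ x ^ ((k:ℝ) - α - 1) * Real.exp (-x) := by positivity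
      exact mul_le_of_le_one_right h1 (Real.exp_le_one_iff.2 (by
        have : (0:ℝ) ≤ β / x := by positivity
        rw [neg_div]; linarith))
    have hlb : Real.Gamma ((k:ℝ) - α) - β * Real.Gamma ((k:ℝ) - α - 1)
        ≤ ∫ x in Ioi (0:ℝ), x ^ ((k:ℝ) - α - 1) * Real.exp (-x) * Real.exp (-β / x) := by
      have hIL : (∫ x in Ioi (0:ℝ),
          (x ^ ((k:ℝ) - α - 1) * Real.exp (-x) -
            β * (x ^ ((k:ℝ) - α - 1 - 1) * Real.exp (-x))))
          = Real.Gamma ((k:ℝ) - α) - β * Real.Gamma ((k:ℝ) - α - 1) := by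
        rw [integral_sub hint_H (hint_H'.const_mul β), integral_const_mul,
          integral_rpow_exp ht1, integral_rpow_exp ht2]
      rw [← hIL]
      refine setIntegral_mono_on hint_L hint_G measurableSet_Ioi (fun x hx => ?_)
      have hx0 : (0:ℝ) < x := hx
      have e2 : x ^ ((k:ℝ) - α - 1 - 1) = x ^ ((k:ℝ) - α - 1) / x := by
        rw [Real.rpow_sub hx0, Real.rpow_one]
      have hH0 : (0:ℝ) ≤ x ^ ((k:ℝ) - α - 1) * Real.exp (-x) := by positivity
      have hexp : 1 - β / x ≤ Real.exp (-β / x) := by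
        have := Real.add_one_le_exp (-β / x)
        rw [neg_div] at this ⊢
        linarith
      have hmm := mul_le_mul_of_nonneg_left hexp hH0
      have hLe : x ^ ((k:ℝ) - α - 1) * Real.exp (-x) -
          β * (x ^ ((k:ℝ) - α - 1 - 1) * Real.exp (-x))
          = x ^ ((k:ℝ) - α - 1) * Real.exp (-x) * (1 - β / x) := by
        rw [e2]; field_simp
      rw [hLe]
      calc x ^ ((k:ℝ) - α - 1) * Real.exp (-x) * (1 - β / x)
          = x ^ ((k:ℝ) - α - 1) * Real.exp (-x) * (1 - β / x) := rfl
        _ ≤ x ^ ((k:ℝ) - α - 1) * Real.exp (-x) * Real.exp (-β / x) := hmm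
    -- rewrite the ratio
    have hfact : ((Nat.factorial k : ℝ)) = Real.Gamma ((k:ℝ) + 1) :=
      (Real.Gamma_nat_eq_factorial k).symm
    have hratio : (∫ x in Set.Ioi (0 : ℝ),
          x ^ k * Real.exp (-x) / (Nat.factorial k) *
            (C * x ^ (-α - 1) * Real.exp (-β / x))) / (C * (k:ℝ) ^ (-α - 1))
        = (∫ x in Ioi (0:ℝ), x ^ ((k:ℝ) - α - 1) * Real.exp (-x) * Real.exp (-β / x)) *
          ((k:ℝ) ^ (α + 1) / Real.Gamma ((k:ℝ) + 1)) := by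
      rw [hF_eq, hfact]
      have hk1 : (k:ℝ) ^ (-α - 1) = ((k:ℝ) ^ (α + 1))⁻¹ := by
        rw [← Real.rpow_neg hk0.le]; congr 1; ring
      rw [hk1]
      have hp : (0:ℝ) < (k:ℝ) ^ (α + 1) := Real.rpow_pos_of_pos hk0 _
      field_simp
    rw [hratio]
    have hpos : (0:ℝ) ≤ (k:ℝ) ^ (α + 1) / Real.Gamma ((k:ℝ) + 1) :=
      le_of_lt (div_pos (Real.rpow_pos_of_pos hk0 _) hg1)
    first
      | exact mul_le_mul_of_nonneg_right hlb hpos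
      | exact mul_le_mul_of_nonneg_right hub hpos
end

section
/- Let f be the generalized inverse Gaussian density with parameters ν, a > 0, b > 0, and π_k = ∫₀^∞ (x^k e^{-x}/k!) f(x) dx. Then π_k ~ ((a/b)^{ν/2} / (2 (1+a/2)^ν K_ν(√(ab)))) · k^{ν-1} e^{-k log(1+a/2)} as k → ∞. -/
/-!
The Poisson weight merges with the GIG density: with `c = 1 + a/2`, `π_k` is a multiple of
`∫₀^∞ x^(p-1) e^(-c x - b/(2x)) dx` with `p = k + ν`. As `p → ∞` the mass of `x^(p-1) e^(-c x)`
escapes to infinity, where `e^(-b/(2x)) → 1`; the bounds `1 - b/(2x) ≤ e^(-b/(2x)) ≤ 1` squeeze the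
integral between `Γ(p)/c^p · (1 - O(1/p))` and `Γ(p)/c^p`. It remains to see `Γ(k + ν) ~ k^(ν-1) k!`,
which follows from Euler's limit formula for `Γ`.
-/

open Filter Topology MeasureTheory

/-- Modified Bessel function of the second kind, via the integral representation
`K_ν(x) = (1/2) ∫₀^∞ t^{ν-1} exp(-(x/2)(t + 1/t)) dt` (valid for `x > 0`). -/
noncomputable def besselK (ν x : ℝ) : ℝ :=
  (1 / 2) * ∫ t in Set.Ioi (0 : ℝ), t ^ (ν - 1) * Real.exp (-(x / 2) * (t + 1 / t))

open Set

namespace Real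

theorem Gamma_mul_prod_range_add {t : ℝ} (ht : 0 < t) (n : ℕ) :
    Gamma t * ∏ j ∈ Finset.range n, (t + j) = Gamma (t + n) := by
  induction n with
  | zero => simp
  | succ n ih =>
    rw [Finset.prod_range_succ, ← mul_assoc, ih, mul_comm, ← Gamma_add_one (by positivity)]
    push_cast
    ring_nf

theorem tendsto_Gamma_nat_add_div (s : ℝ) :
    Tendsto (fun k : ℕ => Gamma (k + s) / ((k : ℝ) ^ (s - 1) * k.factorial)) atTop (𝓝 1) := by
  obtain ⟨m, hm⟩ : ∃ m : ℕ, 1 - s < m := exists_nat_gt (1 - s)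
  induction m generalizing s with
  | zero =>
    have ht : 0 < s - 1 := by push_cast at hm; linarith
    have hG := (Gamma_pos_of_pos ht).ne'
    have h := ((GammaSeq_tendsto_Gamma (s - 1)).inv₀ hG).const_mul (Gamma (s - 1))
    rw [mul_inv_cancel₀ hG] at h
    refine h.congr fun k => ?_
    rw [GammaSeq, inv_div, ← mul_div_assoc, Gamma_mul_prod_range_add ht]
    push_cast
    ring_nf
  | succ m ih =>
    -- `Γ(k + s + 1) = (k + s) Γ(k + s)` relates the ratios for `s` and `s + 1`.
    have hnext := ih (s + 1) (by push_cast at hm; linarith)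
    have hfactor : Tendsto (fun k : ℕ => 1 + s / k) atTop (𝓝 1) := by
      simpa using (tendsto_const_nhds (x := (1 : ℝ))).add
        ((tendsto_const_nhds (x := s)).div_atTop tendsto_natCast_atTop_atTop)
    have hlim : Tendsto (fun k : ℕ => Gamma (k + (s + 1)) / ((k : ℝ) ^ (s + 1 - 1) * k.factorial)
        / (1 + s / k)) atTop (𝓝 1) := by
      have h := hnext.div hfactor one_ne_zero
      rwa [div_one] at h
    refine hlim.congr' ?_
    filter_upwards [eventually_gt_atTop 0, tendsto_natCast_atTop_atTop.eventually_gt_atTop (-s)]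
      with k hk hks
    have hk' : (0 : ℝ) < k := by exact_mod_cast hk
    have hks' : (0 : ℝ) < k + s := by linarith
    rw [← add_assoc, Gamma_add_one hks'.ne', add_sub_cancel_right, rpow_sub_one hk'.ne']
    field_simp

theorem exp_neg_le_factorial_div_pow {y : ℝ} (hy : 0 < y) (n : ℕ) :
    exp (-y) ≤ n.factorial / y ^ n := by
  rw [exp_neg, ← inv_div]
  exact inv_anti₀ (by positivity) (pow_div_factorial_le_exp _ hy.le n)

end Real

theorem integrableOn_rpow_mul_exp_neg_mul {p c : ℝ} (hp : 0 < p) (hc : 0 < c) :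
    IntegrableOn (fun x : ℝ => x ^ (p - 1) * Real.exp (-(c * x))) (Ioi 0) := by
  simpa [Real.rpow_one, neg_mul] using
    integrableOn_rpow_mul_exp_neg_mul_rpow (p := 1) (by linarith : -1 < p - 1) one_pos hc

/-- The normalising constant of the generalised inverse Gaussian law; it equals
`2 (d/c)^(p/2) K_p(2√(cd))`. -/
noncomputable def gigIntegral (p c d : ℝ) : ℝ :=
  ∫ x in Ioi 0, x ^ (p - 1) * Real.exp (-(c * x)) * Real.exp (-(d / x))

section gigIntegral

variable {p c d : ℝ}

theorem integrableOn_gigIntegrand (p : ℝ) (hc : 0 < c) (hd : 0 < d) :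
    IntegrableOn (fun x : ℝ => x ^ (p - 1) * Real.exp (-(c * x)) * Real.exp (-(d / x)))
      (Ioi 0) := by
  -- `e^(-d/x) ≤ n! (x/d)^n` removes the possible singularity of `x^(p-1)` at `0`.
  obtain ⟨n, hn⟩ : ∃ n : ℕ, -p < n := exists_nat_gt (-p)
  have hmajorant := (integrableOn_rpow_mul_exp_neg_mul (p := p + n) (by linarith) hc).const_mul
    (n.factorial / d ^ n)
  refine hmajorant.mono' (by fun_prop) ((ae_restrict_iff' measurableSet_Ioi).2 ?_)
  filter_upwards with x (hx : 0 < x)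
  rw [Real.norm_eq_abs, abs_of_nonneg (by positivity)]
  calc x ^ (p - 1) * Real.exp (-(c * x)) * Real.exp (-(d / x))
      ≤ x ^ (p - 1) * Real.exp (-(c * x)) * (n.factorial / (d / x) ^ n) := by
        gcongr
        exact Real.exp_neg_le_factorial_div_pow (div_pos hd hx) n
    _ = n.factorial / d ^ n * (x ^ (p + n - 1) * Real.exp (-(c * x))) := by
        rw [show p + n - 1 = p - 1 + n by ring, Real.rpow_add hx, Real.rpow_natCast, div_pow]
        field_simp

theorem gigIntegral_pos (p : ℝ) (hc : 0 < c) (hd : 0 < d) : 0 < gigIntegral p c d := by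
  have hpos : ∀ x ∈ Ioi (0 : ℝ), 0 < x ^ (p - 1) * Real.exp (-(c * x)) * Real.exp (-(d / x)) :=
    fun x (hx : 0 < x) => by positivity
  have hsupport : Function.support (fun x : ℝ =>
      x ^ (p - 1) * Real.exp (-(c * x)) * Real.exp (-(d / x))) ∩ Ioi 0 = Ioi 0 :=
    inter_eq_right.2 fun x hx => (hpos x hx).ne'
  rw [gigIntegral, setIntegral_pos_iff_support_of_nonneg_ae
    ((ae_restrict_iff' measurableSet_Ioi).2 (.of_forall fun x hx => (hpos x hx).le))
    (integrableOn_gigIntegrand p hc hd), hsupport, Real.volume_Ioi]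
  exact ENNReal.zero_lt_top

theorem gigIntegral_le_rpow_mul_Gamma (hp : 0 < p) (hc : 0 < c) (hd : 0 < d) :
    gigIntegral p c d ≤ (1 / c) ^ p * Real.Gamma p := by
  rw [← Real.integral_rpow_mul_exp_neg_mul_Ioi hp hc]
  refine setIntegral_mono_on (integrableOn_gigIntegrand p hc hd)
    (integrableOn_rpow_mul_exp_neg_mul hp hc) measurableSet_Ioi fun x (hx : 0 < x) => ?_
  have : Real.exp (-(d / x)) ≤ 1 := Real.exp_le_one_iff.2 (by simp; positivity)
  calc _ ≤ x ^ (p - 1) * Real.exp (-(c * x)) * 1 := by gcongr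
    _ = _ := mul_one _

theorem rpow_mul_Gamma_mul_sub_le_gigIntegral (hp : 1 < p) (hc : 0 < c) (hd : 0 < d) :
    (1 / c) ^ p * Real.Gamma p * (1 - c * d / (p - 1)) ≤ gigIntegral p c d := by
  -- integrate `x^(p-1) e^(-c x) (1 - d / x) ≤ x^(p-1) e^(-c x) e^(-d / x)`
  have hp1 : 0 < p - 1 := by linarith
  have hI := integrableOn_rpow_mul_exp_neg_mul (p := p) (by linarith) hc
  have hI1 := (integrableOn_rpow_mul_exp_neg_mul hp1 hc).const_mul d
  have hlower : ∫ x in Ioi 0, (x ^ (p - 1) * Real.exp (-(c * x))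
      - d * (x ^ (p - 1 - 1) * Real.exp (-(c * x)))) ≤ gigIntegral p c d := by
    refine setIntegral_mono_on (hI.sub hI1) (integrableOn_gigIntegrand p hc hd)
      measurableSet_Ioi fun x (hx : 0 < x) => ?_
    have : 1 - d / x ≤ Real.exp (-(d / x)) := by linarith [Real.add_one_le_exp (-(d / x))]
    calc _ = x ^ (p - 1) * Real.exp (-(c * x)) * (1 - d / x) := by
          rw [Real.rpow_sub_one hx.ne' (p - 1)]; field_simp
      _ ≤ _ := by gcongr
  rw [integral_sub hI hI1, integral_const_mul,
    Real.integral_rpow_mul_exp_neg_mul_Ioi (by linarith) hc,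
    Real.integral_rpow_mul_exp_neg_mul_Ioi hp1 hc] at hlower
  refine le_trans (le_of_eq ?_) hlower
  obtain ⟨q, rfl⟩ : ∃ q, p = q + 1 := ⟨p - 1, by ring⟩
  simp only [add_sub_cancel_right] at hp1 ⊢
  rw [Real.Gamma_add_one hp1.ne', Real.rpow_add_one (by positivity)]
  field_simp

theorem tendsto_rpow_mul_gigIntegral_div_Gamma (hc : 0 < c) (hd : 0 < d) :
    Tendsto (fun p => c ^ p * gigIntegral p c d / Real.Gamma p) atTop (𝓝 1) := by
  have hlower : Tendsto (fun p : ℝ => 1 - c * d / (p - 1)) atTop (𝓝 1) := by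
    simpa [sub_eq_add_neg] using (tendsto_const_nhds (x := (1 : ℝ))).sub
      ((tendsto_const_nhds (x := c * d)).div_atTop
        (tendsto_atTop_add_const_right atTop (-1) tendsto_id))
  have hcancel : ∀ p : ℝ, c ^ p * (1 / c) ^ p = 1 := fun p => by
    rw [← Real.mul_rpow hc.le (by positivity), mul_one_div_cancel hc.ne', Real.one_rpow]
  refine tendsto_of_tendsto_of_tendsto_of_le_of_le' hlower tendsto_const_nhds ?_ ?_
  · filter_upwards [eventually_gt_atTop 1] with p hp
    rw [le_div_iff₀ (Real.Gamma_pos_of_pos (by linarith))]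
    calc _ = c ^ p * ((1 / c) ^ p * Real.Gamma p * (1 - c * d / (p - 1))) := by
          rw [← mul_assoc, ← mul_assoc, hcancel]; ring
      _ ≤ _ := by gcongr; exact rpow_mul_Gamma_mul_sub_le_gigIntegral hp hc hd
  · filter_upwards [eventually_gt_atTop 0] with p hp
    rw [div_le_one (Real.Gamma_pos_of_pos hp)]
    calc _ ≤ c ^ p * ((1 / c) ^ p * Real.Gamma p) := by
          gcongr; exact gigIntegral_le_rpow_mul_Gamma hp hc hd
      _ = _ := by rw [← mul_assoc, hcancel, one_mul]

end gigIntegral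

theorem besselK_eq_half_mul_gigIntegral (ν x : ℝ) :
    besselK ν x = 1 / 2 * gigIntegral ν (x / 2) (x / 2) := by
  rw [besselK, gigIntegral]
  congr 1
  refine setIntegral_congr_fun measurableSet_Ioi fun t (ht : 0 < t) => ?_
  rw [mul_assoc, ← Real.exp_add]
  congr 2
  field_simp
  ring

theorem besselK_pos (ν : ℝ) {x : ℝ} (hx : 0 < x) : 0 < besselK ν x := by
  rw [besselK_eq_half_mul_gigIntegral]
  exact mul_pos one_half_pos (gigIntegral_pos ν (half_pos hx) (half_pos hx))

theorem integral_poisson_mul_gig_eq (k : ℕ) (C ν a b : ℝ) :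
    ∫ x in Ioi (0 : ℝ), x ^ k * Real.exp (-x) / k.factorial *
        (C * x ^ (ν - 1) * Real.exp (-(a * x + b / x) / 2))
      = C / k.factorial * gigIntegral (k + ν) (1 + a / 2) (b / 2) := by
  rw [gigIntegral, ← integral_const_mul]
  refine setIntegral_congr_fun measurableSet_Ioi fun x (hx : 0 < x) => ?_
  have hexp : -x + -(a * x + b / x) / 2 = -((1 + a / 2) * x) + -(b / 2 / x) := by ring
  rw [show (k : ℝ) + ν - 1 = k + (ν - 1) by ring, Real.rpow_add hx, Real.rpow_natCast,
    mul_assoc _ (Real.exp _), ← Real.exp_add, ← hexp, Real.exp_add]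
  ring

/-- Asymptotics of the mixed Poisson (Sichel) probabilities with GIG mixing density:
a power law with exponential cut-off. -/
theorem mixed_poisson_gig_asymptotics
    (ν a b : ℝ) (ha : 0 < a) (hb : 0 < b) :
    Tendsto (fun k : ℕ =>
      (∫ x in Set.Ioi (0 : ℝ),
          x ^ k * Real.exp (-x) / (Nat.factorial k) *
            ((a / b) ^ (ν / 2) / (2 * besselK ν (Real.sqrt (a * b))) * x ^ (ν - 1) *
              Real.exp (-(a * x + b / x) / 2))) /
        ((a / b) ^ (ν / 2) / (2 * (1 + a / 2) ^ ν * besselK ν (Real.sqrt (a * b))) *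
          ((k : ℝ) ^ (ν - 1) * Real.exp (-(k : ℝ) * Real.log (1 + a / 2)))))
      atTop (𝓝 1) := by
  have hc : 0 < 1 + a / 2 := by positivity
  have hK := besselK_pos ν (Real.sqrt_pos.2 (mul_pos ha hb))
  have hlim := ((tendsto_rpow_mul_gigIntegral_div_Gamma hc (half_pos hb)).comp
    (tendsto_atTop_add_const_right atTop ν tendsto_natCast_atTop_atTop)).mul
    (Real.tendsto_Gamma_nat_add_div ν)
  rw [mul_one] at hlim
  refine hlim.congr' ?_
  filter_upwards [tendsto_natCast_atTop_atTop.eventually_gt_atTop (-ν)] with k hkν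
  have hΓ := Real.Gamma_pos_of_pos (by linarith : (0 : ℝ) < k + ν)
  rw [integral_poisson_mul_gig_eq, mul_comm (-(k : ℝ)), ← Real.rpow_def_of_pos hc,
    Real.rpow_neg hc.le, Function.comp_apply, Real.rpow_add hc]
  field_simp
end

section
/- Let w₁, w₂, … be i.i.d. positive random variables with finite mean, s_n = w₁ + ⋯ + w_n, and consider the random graph G_n on n vertices where, conditionally on the weights, each edge {i,j} (i < j) is present independently with probability 1 − exp(−w_i w_j / s_n). Then E(|E_n|)/n → E(w₁)/2 as n → ∞, where |E_n| is the number of edges of G_n. -/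
/-!
Given the weights, `1 - exp (-x) ≤ x` bounds the conditional expected edge count by `s_n / 2`,
whose mean is exactly `n E(w₁) / 2`. Conversely, for the weights truncated at `M`,
`1 - exp (-x) ≥ x - x²` bounds it below by `(∑_{k<n} min(w_k, M))² / (2 s_n) - O(M²)`. By the
strong law of large numbers, applied to the weights and to every truncation, the conditional
count divided by `n` therefore converges almost surely to `E(w₁) / 2` (let `M → ∞`). It is
nonnegative and its mean never exceeds this limit, so dominated convergence applied to its
minimum with `E(w₁) / 2` gives convergence of the means.
-/

open Filter Topology MeasureTheory ProbabilityTheory Finset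

noncomputable def pairSum (n : ℕ) (f : ℕ → ℕ → ℝ) : ℝ :=
  ∑ i ∈ range n, ∑ j ∈ range n, if i < j then f i j else 0

section
variable {n : ℕ} {f g : ℕ → ℕ → ℝ}

theorem pairSum_mono (h : ∀ i j, i < j → f i j ≤ g i j) : pairSum n f ≤ pairSum n g :=
  sum_le_sum fun i _ => sum_le_sum fun j _ => by split_ifs with hij <;> simp [h i j, hij]

theorem pairSum_nonneg (h : ∀ i j, i < j → 0 ≤ f i j) : 0 ≤ pairSum n f := by
  simpa [pairSum] using pairSum_mono (n := n) h

theorem pairSum_mul_const (c : ℝ) : pairSum n (fun i j => f i j * c) = pairSum n f * c := by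
  simp only [pairSum, sum_mul, ite_mul, zero_mul]

theorem pairSum_div_const (c : ℝ) : pairSum n (fun i j => f i j / c) = pairSum n f / c := by
  simp only [div_eq_mul_inv, pairSum_mul_const]

theorem pairSum_succ : pairSum (n + 1) f = pairSum n f + ∑ i ∈ range n, f i n := by
  have hlast : ∑ j ∈ range n, (if n < j then f n j else 0) = 0 :=
    sum_eq_zero fun j hj => if_neg (mem_range.1 hj).asymm
  have hnew : ∑ i ∈ range n, (if i < n then f i n else 0) = ∑ i ∈ range n, f i n :=
    sum_congr rfl fun i hi => if_pos (mem_range.1 hi)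
  simp only [pairSum, sum_range_succ, sum_add_distrib, lt_irrefl, if_false, hlast, hnew, add_zero]

theorem two_mul_pairSum_mul_self (a : ℕ → ℝ) :
    2 * pairSum n (fun i j => a i * a j) = (∑ i ∈ range n, a i) ^ 2 - ∑ i ∈ range n, a i ^ 2 := by
  induction n with
  | zero => simp [pairSum]
  | succ n ih => rw [pairSum_succ, mul_add, ih, sum_range_succ, sum_range_succ, ← sum_mul]; ring

end

theorem Real.sub_sq_le_one_sub_exp_neg {x : ℝ} (hx : 0 ≤ x) : x - x ^ 2 ≤ 1 - Real.exp (-x) := by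
  have h := mul_le_mul_of_nonneg_left (Real.add_one_le_exp x) (Real.exp_pos (-x)).le
  rw [← Real.exp_add, neg_add_cancel, Real.exp_zero] at h
  nlinarith [Real.exp_pos (-x)]

theorem Real.one_sub_exp_neg_le_self (x : ℝ) : 1 - Real.exp (-x) ≤ x := by
  linarith [Real.one_sub_le_exp_neg x]

section
variable {n : ℕ} {a : ℕ → ℝ}

theorem pairSum_mul_self_le :
    pairSum n (fun i j => a i * a j) ≤ (∑ k ∈ range n, a k) ^ 2 / 2 := by
  have h := two_mul_pairSum_mul_self (n := n) a
  have hQ : 0 ≤ ∑ k ∈ range n, a k ^ 2 := sum_nonneg fun k _ => sq_nonneg _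
  linarith

theorem sq_sum_sub_le_two_mul_pairSum {M : ℝ} (ha0 : ∀ k, 0 ≤ a k) (haM : ∀ k, a k ≤ M) :
    (∑ k ∈ range n, a k) ^ 2 - M * ∑ k ∈ range n, a k ≤ 2 * pairSum n (fun i j => a i * a j) := by
  have hQ : ∑ k ∈ range n, a k ^ 2 ≤ M * ∑ k ∈ range n, a k := by
    rw [mul_sum]
    exact sum_le_sum fun k _ => by rw [sq]; exact mul_le_mul_of_nonneg_right (haM k) (ha0 k)
  linarith [two_mul_pairSum_mul_self (n := n) a]

theorem pairSum_one_sub_exp_le {S : ℝ} (hS : 0 ≤ S) :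
    pairSum n (fun i j => 1 - Real.exp (-(a i * a j) / S)) ≤ (∑ k ∈ range n, a k) ^ 2 / (2 * S) :=
  calc pairSum n (fun i j => 1 - Real.exp (-(a i * a j) / S))
      ≤ pairSum n (fun i j => a i * a j / S) :=
        pairSum_mono fun i j _ => by rw [neg_div]; exact Real.one_sub_exp_neg_le_self _
    _ = pairSum n (fun i j => a i * a j) / S := pairSum_div_const S
    _ ≤ (∑ k ∈ range n, a k) ^ 2 / 2 / S := by gcongr; exact pairSum_mul_self_le
    _ = (∑ k ∈ range n, a k) ^ 2 / (2 * S) := by rw [div_div]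

theorem sq_sum_div_sub_le_pairSum_one_sub_exp {M S : ℝ} (ha0 : ∀ k, 0 ≤ a k)
    (haM : ∀ k, a k ≤ M) (hS : 0 < S) (hTS : ∑ k ∈ range n, a k ≤ S) :
    (∑ k ∈ range n, a k) ^ 2 / (2 * S) - (M / 2 + M ^ 2 / 2)
      ≤ pairSum n (fun i j => 1 - Real.exp (-(a i * a j) / S)) := by
  set T := ∑ k ∈ range n, a k
  set X := pairSum n (fun i j => a i * a j / S)
  have hM : 0 ≤ M := (ha0 0).trans (haM 0)
  have hT : 0 ≤ T := sum_nonneg fun k _ => ha0 k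
  have hX : X = 2 * pairSum n (fun i j => a i * a j) / (2 * S) := by
    rw [mul_div_mul_left _ _ two_ne_zero]; exact pairSum_div_const S
  have hX_lo : T ^ 2 / (2 * S) - M / 2 ≤ X := by
    have hlo := sq_sum_sub_le_two_mul_pairSum (n := n) ha0 haM
    calc T ^ 2 / (2 * S) - M / 2 ≤ (T ^ 2 - M * T) / (2 * S) := by
          have h : M * T / (2 * S) ≤ M / 2 := by
            rw [div_le_div_iff₀ (by positivity) two_pos]; nlinarith
          rw [sub_div]; linarith
      _ ≤ X := by rw [hX]; gcongr
  have hX_hi : X ≤ S / 2 := by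
    calc X ≤ T ^ 2 / (2 * S) := by rw [hX]; gcongr; linarith [pairSum_mul_self_le (n := n) (a := a)]
      _ ≤ S ^ 2 / (2 * S) := by gcongr
      _ = S / 2 := by field_simp
  calc T ^ 2 / (2 * S) - (M / 2 + M ^ 2 / 2) ≤ X * (1 - M ^ 2 / S) := by
        have h := mul_le_mul_of_nonneg_left hX_hi (by positivity : 0 ≤ M ^ 2 / S)
        rw [show M ^ 2 / S * (S / 2) = M ^ 2 / 2 by field_simp] at h
        linarith
    _ = pairSum n (fun i j => a i * a j / S * (1 - M ^ 2 / S)) := (pairSum_mul_const _).symm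
    _ ≤ pairSum n (fun i j => a i * a j / S - (a i * a j / S) ^ 2) := by
        refine pairSum_mono fun i j _ => ?_
        have hx : 0 ≤ a i * a j / S := by have := ha0 i; have := ha0 j; positivity
        have hxM : a i * a j / S ≤ M ^ 2 / S := by
          gcongr; exact (mul_le_mul (haM i) (haM j) (ha0 j) hM).trans_eq (sq M).symm
        nlinarith
    _ ≤ pairSum n (fun i j => 1 - Real.exp (-(a i * a j) / S)) := by
        refine pairSum_mono fun i j _ => ?_
        rw [neg_div]
        exact Real.sub_sq_le_one_sub_exp_neg (by have := ha0 i; have := ha0 j; positivity)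

end

theorem tendsto_of_tendsto_of_le_of_forall_tendsto_le {α ι κ : Type*} [TopologicalSpace α]
    [LinearOrder α] [OrderTopology α] {l : Filter ι} {k : Filter κ} [k.NeBot]
    {u v : ι → α} {low : κ → ι → α} {L : κ → α} {c : α}
    (hv : Tendsto v l (𝓝 c)) (huv : ∀ᶠ n in l, u n ≤ v n)
    (hlow : ∀ M, Tendsto (low M) l (𝓝 (L M))) (hlowu : ∀ M, ∀ᶠ n in l, low M n ≤ u n)
    (hL : Tendsto L k (𝓝 c)) : Tendsto u l (𝓝 c) := by
  refine tendsto_order.2 ⟨fun a ha => ?_, fun b hb => ?_⟩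
  · obtain ⟨M, hM⟩ := ((tendsto_order.1 hL).1 a ha).exists
    filter_upwards [(tendsto_order.1 (hlow M)).1 a hM, hlowu M] with n h₁ h₂ using h₁.trans_le h₂
  · filter_upwards [(tendsto_order.1 hv).2 b hb, huv] with n h₁ h₂ using h₂.trans_lt h₁

/-- The conditional expectation of the number of edges of `G_n` given the weights `g`. -/
noncomputable def edgeMean (g : ℕ → ℝ) (n : ℕ) : ℝ :=
  pairSum n fun i j => 1 - Real.exp (-(g i * g j) / ∑ k ∈ range n, g k)

section
variable {g : ℕ → ℝ} {n : ℕ}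

theorem edgeMean_nonneg (hg : ∀ k, 0 ≤ g k) : 0 ≤ edgeMean g n :=
  pairSum_nonneg fun i j _ => by
    have := hg i; have := hg j
    have : 0 ≤ ∑ k ∈ range n, g k := sum_nonneg fun k _ => hg k
    rw [sub_nonneg, Real.exp_le_one_iff, neg_div, neg_nonpos]
    positivity

theorem edgeMean_le (hg : ∀ k, 0 ≤ g k) : edgeMean g n ≤ (∑ k ∈ range n, g k) / 2 := by
  have hS : 0 ≤ ∑ k ∈ range n, g k := sum_nonneg fun k _ => hg k
  calc edgeMean g n ≤ (∑ k ∈ range n, g k) ^ 2 / (2 * ∑ k ∈ range n, g k) :=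
        pairSum_one_sub_exp_le hS
    _ = (∑ k ∈ range n, g k) / 2 := by
        rcases hS.eq_or_lt with h | h
        · simp [← h]
        · field_simp

theorem le_edgeMean (hg : ∀ k, 0 ≤ g k) (hS : 0 < ∑ k ∈ range n, g k) {M : ℝ} (hM : 0 ≤ M) :
    (∑ k ∈ range n, min (g k) M) ^ 2 / (2 * ∑ k ∈ range n, g k) - (M / 2 + M ^ 2 / 2)
      ≤ edgeMean g n := by
  have hmin0 : ∀ k, 0 ≤ min (g k) M := fun k => le_min (hg k) hM
  refine (sq_sum_div_sub_le_pairSum_one_sub_exp hmin0 (fun k => min_le_right _ _) hS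
    (sum_le_sum fun k _ => min_le_left _ _)).trans (pairSum_mono fun i j _ => ?_)
  gcongr
  exacts [hmin0 j, hg i, min_le_left _ _, min_le_left _ _]

theorem tendsto_edgeMean_div {m : ℝ} {mTrunc : ℕ → ℝ} (hg : ∀ k, 0 < g k) (hm : 0 < m)
    (hmean : Tendsto (fun n : ℕ => (∑ k ∈ range n, g k) / n) atTop (𝓝 m))
    (hmeanTrunc : ∀ M : ℕ,
      Tendsto (fun n : ℕ => (∑ k ∈ range n, min (g k) M) / n) atTop (𝓝 (mTrunc M)))
    (hTrunc : Tendsto mTrunc atTop (𝓝 m)) :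
    Tendsto (fun n : ℕ => edgeMean g n / n) atTop (𝓝 (m / 2)) := by
  have hg0 : ∀ k, 0 ≤ g k := fun k => (hg k).le
  refine tendsto_of_tendsto_of_le_of_forall_tendsto_le (k := atTop) (hmean.div_const 2)
    (Eventually.of_forall fun n => ?_)
    (low := fun (M : ℕ) (n : ℕ) => ((∑ k ∈ range n, min (g k) M) / n) ^ 2
      / (2 * ((∑ k ∈ range n, g k) / n)) - ((M : ℝ) / 2 + (M : ℝ) ^ 2 / 2) / n)
    (L := fun M => mTrunc M ^ 2 / (2 * m))
    (fun M => ?_) (fun M => ?_) ?_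
  · rw [div_right_comm]; gcongr; exact edgeMean_le hg0
  · simpa using ((hmeanTrunc M).pow 2).div (hmean.const_mul 2) (by positivity) |>.sub
      (tendsto_const_div_atTop_nhds_zero_nat ((M : ℝ) / 2 + (M : ℝ) ^ 2 / 2))
  · filter_upwards [eventually_gt_atTop 0] with n hn
    have hS : 0 < ∑ k ∈ range n, g k := sum_pos (fun k _ => hg k) (nonempty_range_iff.2 hn.ne')
    have h := div_le_div_of_nonneg_right (le_edgeMean hg0 hS (M.cast_nonneg))
      (n.cast_nonneg (α := ℝ))
    convert h using 1
    field_simp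
  · convert (hTrunc.pow 2).div_const (2 * m) using 2
    field_simp

end

section
variable {Ω : Type*} [MeasurableSpace Ω] {μ : Measure Ω}

theorem tendsto_integral_min_natCast {f : Ω → ℝ} (hf : Integrable f μ) :
    Tendsto (fun M : ℕ => ∫ ω, min (f ω) M ∂μ) atTop (𝓝 (∫ ω, f ω ∂μ)) := by
  refine tendsto_integral_of_dominated_convergence (fun ω => ‖f ω‖)
    (fun M => hf.aestronglyMeasurable.inf aestronglyMeasurable_const) hf.norm
    (fun M => ae_of_all _ fun ω => ?_) (ae_of_all _ fun ω => ?_)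
  · rw [Real.norm_eq_abs, Real.norm_eq_abs, abs_le]
    constructor
    · exact le_min (neg_abs_le _) ((neg_nonpos.2 (abs_nonneg _)).trans M.cast_nonneg)
    · exact (min_le_left _ _).trans (le_abs_self _)
  · refine tendsto_const_nhds.congr' ?_
    filter_upwards [eventually_ge_atTop ⌈f ω⌉₊] with M hM
    exact (min_eq_left ((Nat.le_ceil _).trans (Nat.cast_le.2 hM))).symm

theorem tendsto_integral_of_ae_tendsto_of_integral_le [IsProbabilityMeasure μ] {ι : Type*}
    {l : Filter ι} [l.IsCountablyGenerated] {f : ι → Ω → ℝ} {c : ℝ}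
    (hf : ∀ n, Integrable (f n) μ) (hf0 : ∀ n, 0 ≤ᵐ[μ] f n)
    (hlim : ∀ᵐ ω ∂μ, Tendsto (fun n => f n ω) l (𝓝 c)) (hle : ∀ n, ∫ ω, f n ω ∂μ ≤ c) :
    Tendsto (fun n => ∫ ω, f n ω ∂μ) l (𝓝 c) := by
  have hmin : Tendsto (fun n => ∫ ω, min (f n ω) c ∂μ) l (𝓝 c) := by
    have h := tendsto_integral_filter_of_dominated_convergence (μ := μ)
      (F := fun n ω => min (f n ω) c) (fun _ => |c|)
      (Eventually.of_forall fun n => (hf n).aestronglyMeasurable.inf aestronglyMeasurable_const)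
      (Eventually.of_forall fun n => (hf0 n).mono fun ω hω => by
        rw [Real.norm_eq_abs, abs_le]
        exact ⟨le_min ((neg_nonpos.2 (abs_nonneg c)).trans hω) (neg_abs_le c),
          (min_le_right _ _).trans (le_abs_self c)⟩)
      (integrable_const |c|)
      (hlim.mono fun ω hω => by simpa using hω.min (tendsto_const_nhds (x := c)))
    rwa [integral_const, probReal_univ, one_smul] at h
  exact tendsto_of_tendsto_of_tendsto_of_le_of_le hmin tendsto_const_nhds
    (fun n => integral_mono_ae ((hf n).inf (integrable_const c)) (hf n)
      (ae_of_all _ fun ω => min_le_left _ _)) hle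

variable {w : ℕ → Ω → ℝ}

theorem integral_sum_range_of_identDistrib (hident : ∀ i, IdentDistrib (w i) (w 0) μ μ)
    (hint : Integrable (w 0) μ) (n : ℕ) :
    ∫ ω, ∑ k ∈ range n, w k ω ∂μ = n * ∫ ω, w 0 ω ∂μ := by
  rw [integral_finsetSum _ fun k _ => (hident k).integrable_iff.2 hint,
    sum_congr rfl fun k _ => (hident k).integral_eq, sum_const, card_range, nsmul_eq_mul]

theorem measurable_pairSum {f : ℕ → ℕ → Ω → ℝ} (hf : ∀ i j, Measurable (f i j)) (n : ℕ) :
    Measurable fun ω => pairSum n fun i j => f i j ω :=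
  Finset.measurable_sum _ fun i _ => Finset.measurable_sum _ fun j _ => by
    by_cases h : i < j <;> simp [h, hf i j]

theorem measurable_edgeMean (hw : ∀ k, Measurable (w k)) (n : ℕ) :
    Measurable fun ω => edgeMean (fun k => w k ω) n :=
  measurable_pairSum (fun i j => by fun_prop) n

theorem integrable_edgeMean (hw : ∀ k, Measurable (w k)) (hw0 : ∀ k ω, 0 ≤ w k ω)
    (hint : ∀ k, Integrable (w k) μ) (n : ℕ) :
    Integrable (fun ω => edgeMean (fun k => w k ω) n) μ := by
  refine ((integrable_finsetSum (range n) fun k _ => hint k).div_const 2).mono'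
    (measurable_edgeMean hw n).aestronglyMeasurable (ae_of_all _ fun ω => ?_)
  rw [Real.norm_eq_abs, abs_of_nonneg (edgeMean_nonneg (hw0 · ω))]
  exact edgeMean_le (hw0 · ω)

theorem integral_edgeMean_div_le (hw : ∀ k, Measurable (w k)) (hw0 : ∀ k ω, 0 ≤ w k ω)
    (hident : ∀ i, IdentDistrib (w i) (w 0) μ μ) (hint : Integrable (w 0) μ) (n : ℕ) :
    ∫ ω, edgeMean (fun k => w k ω) n / n ∂μ ≤ (∫ ω, w 0 ω ∂μ) / 2 := by
  have hint' : ∀ k, Integrable (w k) μ := fun k => (hident k).integrable_iff.2 hint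
  have hmean : 0 ≤ ∫ ω, w 0 ω ∂μ := integral_nonneg (hw0 0)
  rcases n.eq_zero_or_pos with rfl | hn
  · simpa using div_nonneg hmean zero_le_two
  have hle : ∫ ω, edgeMean (fun k => w k ω) n ∂μ ≤ ∫ ω, (∑ k ∈ range n, w k ω) / 2 ∂μ :=
    integral_mono (integrable_edgeMean hw hw0 hint' n)
      ((integrable_finsetSum (range n) fun k _ => hint' k).div_const 2)
      fun ω => edgeMean_le (hw0 · ω)
  rw [integral_div, integral_sum_range_of_identDistrib hident hint] at hle
  rw [integral_div, div_le_iff₀ (by exact_mod_cast hn)]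
  linarith

theorem ae_tendsto_edgeMean_div [NeZero μ] (hpos : ∀ i ω, 0 < w i ω)
    (hindep : Pairwise (Function.onFun (IndepFun · · μ) w))
    (hident : ∀ i, IdentDistrib (w i) (w 0) μ μ)
    (hint : Integrable (w 0) μ) :
    ∀ᵐ ω ∂μ, Tendsto (fun n : ℕ => edgeMean (fun k => w k ω) n / n) atTop
      (𝓝 ((∫ ω, w 0 ω ∂μ) / 2)) := by
  have hmean : 0 < ∫ ω, w 0 ω ∂μ := by
    rw [integral_pos_iff_support_of_nonneg (fun ω => (hpos 0 ω).le) hint,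
      Function.support_eq_univ fun ω => (hpos 0 ω).ne']
    exact Measure.measure_univ_pos.2 (NeZero.ne μ)
  have hmeanTrunc : ∀ M : ℕ, ∀ᵐ ω ∂μ, Tendsto (fun n : ℕ => (∑ k ∈ range n, min (w k ω) M) / n)
      atTop (𝓝 (∫ ω, min (w 0 ω) M ∂μ)) := fun M => by
    have hφ : Measurable fun x : ℝ => min x M := by fun_prop
    refine strong_law_ae_real (fun k ω => min (w k ω) M) ?_
      (fun i j hij => (hindep hij).comp hφ hφ) (fun i => (hident i).comp hφ)
    refine hint.mono (hint.aestronglyMeasurable.inf aestronglyMeasurable_const)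
      (ae_of_all _ fun ω => ?_)
    have hM : (0 : ℝ) ≤ M := M.cast_nonneg
    rw [Real.norm_eq_abs, Real.norm_eq_abs, abs_of_pos (hpos 0 ω),
      abs_of_nonneg (le_min (hpos 0 ω).le hM)]
    exact min_le_left _ _
  filter_upwards [strong_law_ae_real w hint hindep hident, ae_all_iff.2 hmeanTrunc]
    with ω hω hωTrunc
  exact tendsto_edgeMean_div (hpos · ω) hmean hω hωTrunc (tendsto_integral_min_natCast hint)

end

/-- Sparsity of the rank-1 Norros–Reittu inhomogeneous random graph: for iid positive
integrable weights, the expected number of edges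
`E|E_n| = E[∑_{i<j<n} (1 - exp(-w_i w_j / s_n))]` satisfies `E|E_n|/n → E(w₁)/2`. -/
theorem norros_reittu_expected_edges
    {Ω : Type*} [MeasurableSpace Ω] (μ : Measure Ω) [IsProbabilityMeasure μ]
    (w : ℕ → Ω → ℝ)
    (hmeas : ∀ i, Measurable (w i))
    (hpos : ∀ i ω, 0 < w i ω)
    (hindep : iIndepFun (m := fun _ => Real.measurableSpace) w μ)
    (hident : ∀ i, IdentDistrib (w i) (w 0) μ μ)
    (hint : Integrable (w 0) μ) :
    Tendsto (fun n : ℕ =>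
      (∫ ω, ∑ i ∈ Finset.range n, ∑ j ∈ Finset.range n,
        (if i < j then
          1 - Real.exp (-(w i ω * w j ω) / ∑ k ∈ Finset.range n, w k ω)
         else 0) ∂μ) / n)
      atTop (𝓝 ((∫ ω, w 0 ω ∂μ) / 2)) := by
  have hw0 : ∀ i ω, 0 ≤ w i ω := fun i ω => (hpos i ω).le
  have hint' : ∀ k, Integrable (w k) μ := fun k => (hident k).integrable_iff.2 hint
  change Tendsto (fun n : ℕ => (∫ ω, edgeMean (fun k => w k ω) n ∂μ) / n) atTop _
  simpa only [integral_div] using tendsto_integral_of_ae_tendsto_of_integral_le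
    (fun n => (integrable_edgeMean hmeas hw0 hint' n).div_const _)
    (fun n => ae_of_all _ fun ω => div_nonneg (edgeMean_nonneg (hw0 · ω)) n.cast_nonneg)
    (ae_tendsto_edgeMean_div hpos (fun i j hij => hindep.indepFun hij) hident hint)
    (integral_edgeMean_div_le hmeas hw0 hident hint)
end

section
/- Let X be a nonnegative random variable with 1 − F_X(x) ~ ℓ(x) x^{-α} as x → ∞ for α > 0 and slowly varying ℓ, and let Y > 0 be independent of X with E(Y^{α+ε}) < ∞ for some ε > 0. Then Z = XY satisfies 1 − F_Z(z) ~ E(Y^α) ℓ(z) z^{-α} as z → ∞. -/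
/-!
Write `G x = P(X > x)`. By independence `P(XY > z) = E[G(z/Y)]`, so it suffices that
`E[G(z/Y)/G(z)] → E[Y^α]`. Since `G` is regularly varying with index `-α`, the integrand tends
to `Y^α` pointwise. On `{z₀ Y ≤ z}` the dyadic Potter bound `G(z/y) ≤ (2y)^β G(z)`, for some
`α < β < α + ε`, dominates it by `1 + 2^β Y^β`. On the complement it is at most `1/G(z)`, and
Markov's inequality gives `P(z₀ Y > z) = O(z^{-(α+ε)})`, which is negligible because the Potter
bound also forces `z^(α+ε) G(z) → ∞`.
-/

open Filter Topology MeasureTheory ProbabilityTheory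

def RegularlyVarying (f : ℝ → ℝ) (ρ : ℝ) : Prop :=
  ∀ c : ℝ, 0 < c → Tendsto (fun t => f (c * t) / f t) atTop (𝓝 (c ^ ρ))

namespace RegularlyVarying

variable {f g : ℝ → ℝ} {ρ : ℝ}

theorem mul_rpow (hf : RegularlyVarying f ρ) (σ : ℝ) :
    RegularlyVarying (fun x => f x * x ^ σ) (ρ + σ) := by
  intro c hc
  rw [Real.rpow_add hc]
  refine ((hf c hc).mul_const (c ^ σ)).congr' ?_
  filter_upwards [eventually_gt_atTop 0] with t ht
  rw [Real.mul_rpow hc.le ht.le, mul_div_mul_comm,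
    mul_div_cancel_right₀ _ (Real.rpow_pos_of_pos ht σ).ne']

theorem of_tendsto_div (hg : RegularlyVarying g ρ)
    (hfg : Tendsto (fun x => f x / g x) atTop (𝓝 1)) : RegularlyVarying f ρ := by
  intro c hc
  have hc_top : Tendsto (c * ·) atTop atTop := tendsto_id.const_mul_atTop hc
  have hne : ∀ᶠ x in atTop, f x / g x ≠ 0 := hfg.eventually_ne one_ne_zero
  have key := ((hfg.comp hc_top).div hfg one_ne_zero).mul (hg c hc)
  rw [div_one, one_mul] at key
  refine key.congr' ?_
  filter_upwards [hne, hc_top.eventually hne] with t ht hct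
  obtain ⟨hft, hgt⟩ := div_ne_zero_iff.mp ht
  obtain ⟨hfct, hgct⟩ := div_ne_zero_iff.mp hct
  simp only [Function.comp_apply, Pi.div_apply]
  field_simp

theorem tendsto_comp_div (hf : RegularlyVarying f ρ) {y : ℝ} (hy : 0 < y) :
    Tendsto (fun t => f (t / y) / f t) atTop (𝓝 (y ^ (-ρ))) := by
  have := hf y⁻¹ (inv_pos.2 hy)
  rw [Real.inv_rpow hy.le, ← Real.rpow_neg hy.le] at this
  simpa only [div_eq_inv_mul] using this

end RegularlyVarying

theorem apply_le_pow_mul_of_doubling {G : ℝ → ℝ} {C u₀ : ℝ} (hC : 0 ≤ C) (hu₀ : 0 ≤ u₀)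
    (h : ∀ u, u₀ ≤ u → G u ≤ C * G (2 * u)) (n : ℕ) {u : ℝ} (hu : u₀ ≤ u) :
    G u ≤ C ^ n * G (2 ^ n * u) := by
  induction n with
  | zero => simp
  | succ n ih =>
    have h2n : u₀ ≤ 2 ^ n * u :=
      hu.trans (le_mul_of_one_le_left (hu₀.trans hu) (one_le_pow₀ one_le_two))
    calc G u ≤ C ^ n * G (2 ^ n * u) := ih
      _ ≤ C ^ n * (C * G (2 * (2 ^ n * u))) := by gcongr; exact h _ h2n
      _ = C ^ (n + 1) * G (2 ^ (n + 1) * u) := by ring_nf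

theorem Antitone.apply_div_le_rpow_mul {G : ℝ → ℝ} (hG : Antitone G) (hG₀ : ∀ x, 0 ≤ G x)
    {β u₀ : ℝ} (hβ : 0 ≤ β) (hu₀ : 0 ≤ u₀) (h : ∀ u, u₀ ≤ u → G u ≤ 2 ^ β * G (2 * u))
    {y z : ℝ} (hy : 1 ≤ y) (hz : 2 * u₀ * y ≤ z) : G (z / y) ≤ (2 * y) ^ β * G z := by
  obtain ⟨n, hn, hyn⟩ := exists_nat_pow_near hy one_lt_two
  have h2n : (2 : ℝ) ^ (n + 1) ≤ 2 * y := by rw [pow_succ]; linarith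
  have hpos : (0 : ℝ) < 2 ^ (n + 1) := by positivity
  have hz₀ : 0 ≤ z := le_trans (by positivity) hz
  have hu : u₀ ≤ z / 2 ^ (n + 1) := by
    rw [le_div_iff₀ hpos]; nlinarith
  calc G (z / y) ≤ G (z / 2 ^ (n + 1)) :=
        hG (div_le_div_of_nonneg_left hz₀ (by linarith) hyn.le)
    _ ≤ (2 ^ β) ^ (n + 1) * G (2 ^ (n + 1) * (z / 2 ^ (n + 1))) :=
        apply_le_pow_mul_of_doubling (by positivity) hu₀ h (n + 1) hu
    _ = ((2 : ℝ) ^ (n + 1)) ^ β * G z := by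
        rw [mul_div_cancel₀ _ hpos.ne', ← Real.rpow_natCast, ← Real.rpow_natCast,
          ← Real.rpow_mul zero_le_two, ← Real.rpow_mul zero_le_two, mul_comm β]
    _ ≤ (2 * y) ^ β * G z := by gcongr; exact hG₀ z

theorem RegularlyVarying.exists_potter_bound {G : ℝ → ℝ} {α β : ℝ}
    (hf : RegularlyVarying G (-α)) (hG : Antitone G) (hGpos : ∀ x, 0 < G x)
    (hαβ : α < β) (hβ : 0 ≤ β) :
    ∃ z₀ > 0, ∀ y z, 1 ≤ y → z₀ * y ≤ z → G (z / y) ≤ (2 * y) ^ β * G z := by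
  have hlt : (2 : ℝ) ^ (-β) < 2 ^ (-α) :=
    Real.rpow_lt_rpow_of_exponent_lt one_lt_two (by linarith)
  obtain ⟨u₀, hu₀⟩ := eventually_atTop.1 ((hf 2 two_pos).eventually (lt_mem_nhds hlt))
  refine ⟨2 * max u₀ 1, by positivity, fun y z hy hz => ?_⟩
  refine hG.apply_div_le_rpow_mul (fun x => (hGpos x).le) hβ
    (zero_le_one.trans (le_max_right _ _)) (fun u hu => ?_) hy hz
  have := hu₀ u (le_of_max_le_left hu)
  rw [lt_div_iff₀ (hGpos u), Real.rpow_neg zero_le_two, inv_mul_lt_iff₀ (by positivity)] at this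
  exact this.le

theorem tendsto_rpow_mul_atTop_of_potter_bound {G : ℝ → ℝ} {β γ z₀ : ℝ} (hz₀ : 0 < z₀)
    (hGz₀ : 0 < G z₀) (hβγ : β < γ)
    (hpotter : ∀ y z, 1 ≤ y → z₀ * y ≤ z → G (z / y) ≤ (2 * y) ^ β * G z) :
    Tendsto (fun z => z ^ γ * G z) atTop atTop := by
  have hlim : Tendsto (fun z : ℝ => G z₀ * (2 / z₀) ^ (-β) * z ^ (γ - β)) atTop atTop :=
    (tendsto_rpow_atTop (by linarith)).const_mul_atTop (by positivity)
  refine tendsto_atTop_mono' _ ?_ hlim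
  filter_upwards [eventually_ge_atTop z₀] with z hz
  have hz0 : 0 < z := hz₀.trans_le hz
  have h := hpotter (z / z₀) z ((one_le_div hz₀).2 hz) (mul_div_cancel₀ _ hz₀.ne').le
  rw [div_div_cancel₀ hz0.ne', show 2 * (z / z₀) = 2 / z₀ * z by ring,
    Real.mul_rpow (by positivity) hz0.le] at h
  rw [Real.rpow_sub hz0, Real.rpow_neg (by positivity)]
  have : 0 < (2 / z₀) ^ β * z ^ β := by positivity
  calc G z₀ * ((2 / z₀) ^ β)⁻¹ * (z ^ γ / z ^ β)
        = G z₀ / ((2 / z₀) ^ β * z ^ β) * z ^ γ := by field_simp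
    _ ≤ G z * z ^ γ := by gcongr; rwa [div_le_iff₀' this]
    _ = z ^ γ * G z := mul_comm _ _

section

variable {Ω : Type*} [MeasurableSpace Ω] {μ : Measure Ω} [IsFiniteMeasure μ] {Y : Ω → ℝ}

theorem integrable_rpow_of_le (hY : Measurable Y) (hY₀ : ∀ ω, 0 ≤ Y ω) {γ δ : ℝ}
    (hγ : 0 ≤ γ) (hγδ : γ ≤ δ) (hδ : Integrable (fun ω => Y ω ^ δ) μ) :
    Integrable (fun ω => Y ω ^ γ) μ := by
  refine ((integrable_const 1).add hδ).mono' (by fun_prop) (Eventually.of_forall fun ω => ?_)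
  rw [Real.norm_of_nonneg (Real.rpow_nonneg (hY₀ ω) γ), Pi.add_apply]
  rcases le_total (Y ω) 1 with h | h
  · linarith [Real.rpow_le_one (hY₀ ω) h hγ, Real.rpow_nonneg (hY₀ ω) δ]
  · linarith [Real.rpow_le_rpow_of_exponent_le h hγδ]

theorem measureReal_lt_le_integral_rpow_div (hY₀ : ∀ ω, 0 ≤ Y ω) {γ t : ℝ} (hγ : 0 ≤ γ)
    (ht : 0 < t) (hint : Integrable (fun ω => Y ω ^ γ) μ) :
    μ.real {ω | t < Y ω} ≤ (∫ ω, Y ω ^ γ ∂μ) / t ^ γ := by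
  rw [le_div_iff₀' (by positivity)]
  calc t ^ γ * μ.real {ω | t < Y ω} ≤ t ^ γ * μ.real {ω | t ^ γ ≤ Y ω ^ γ} := by
        gcongr with ω
        · exact measure_ne_top μ _
        · exact fun hω => Real.rpow_le_rpow ht.le hω.le hγ
    _ ≤ ∫ ω, Y ω ^ γ ∂μ :=
        mul_meas_ge_le_integral_of_nonneg (Eventually.of_forall fun ω => by
          simp only [Pi.zero_apply]; exact Real.rpow_nonneg (hY₀ ω) γ) hint _

variable {G : ℝ → ℝ} {α β γ z₀ : ℝ}

theorem tendsto_integral_indicator_le_div (hY : Measurable Y) (hYpos : ∀ ω, 0 < Y ω)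
    (hG : Antitone G) (hGpos : ∀ x, 0 < G x) (hf : RegularlyVarying G (-α))
    (hYβ : Integrable (fun ω => Y ω ^ β) μ)
    (hpotter : ∀ y z, 1 ≤ y → z₀ * y ≤ z → G (z / y) ≤ (2 * y) ^ β * G z) :
    Tendsto (fun z => ∫ ω, {ω | z₀ * Y ω ≤ z}.indicator (fun ω => G (z / Y ω) / G z) ω ∂μ)
      atTop (𝓝 (∫ ω, Y ω ^ α ∂μ)) := by
  refine tendsto_integral_filter_of_dominated_convergence (fun ω => 1 + 2 ^ β * Y ω ^ β)
    (Eventually.of_forall fun z => ?_) ?_ ((integrable_const 1).add (hYβ.const_mul _)) ?_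
  · exact ((hG.measurable.comp (measurable_const.div hY)).div_const _).indicator
      (measurableSet_le (by fun_prop) measurable_const) |>.aestronglyMeasurable
  · filter_upwards [eventually_ge_atTop 0] with z hz
    refine Eventually.of_forall fun ω => ?_
    have hYω := hYpos ω
    simp only [Set.indicator_apply, Set.mem_ofPred_eq]
    split_ifs with hω
    · rw [Real.norm_of_nonneg (div_nonneg (hGpos _).le (hGpos z).le),
        div_le_iff₀ (hGpos z)]
      rcases le_total (Y ω) 1 with h1 | h1
      · have : G (z / Y ω) ≤ G z := hG (le_div_self hz hYω h1)
        have : 0 ≤ 2 ^ β * Y ω ^ β * G z := mul_nonneg (by positivity) (hGpos z).le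
        nlinarith
      · have := hpotter (Y ω) z h1 hω
        rw [Real.mul_rpow zero_le_two hYω.le] at this
        nlinarith [hGpos z]
    · rw [norm_zero]; positivity
  · refine Eventually.of_forall fun ω => ?_
    have h := hf.tendsto_comp_div (hYpos ω)
    rw [neg_neg] at h
    refine h.congr' ?_
    filter_upwards [eventually_ge_atTop (z₀ * Y ω)] with z hz
    simp only [Set.indicator_apply, Set.mem_ofPred_eq, if_pos hz]

theorem tendsto_integral_indicator_compl_le_div (hY : Measurable Y) (hYpos : ∀ ω, 0 < Y ω)
    (hGpos : ∀ x, 0 < G x) (hG₁ : ∀ x, G x ≤ 1) (hγ : 0 ≤ γ)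
    (hYγ : Integrable (fun ω => Y ω ^ γ) μ) (hz₀ : 0 < z₀)
    (hgrowth : Tendsto (fun z => z ^ γ * G z) atTop atTop) :
    Tendsto (fun z => ∫ ω, {ω | z₀ * Y ω ≤ z}ᶜ.indicator (fun ω => G (z / Y ω) / G z) ω ∂μ)
      atTop (𝓝 0) := by
  set M := ∫ ω, Y ω ^ γ ∂μ
  have hbound : Tendsto (fun z => M * z₀ ^ γ * (z ^ γ * G z)⁻¹) atTop (𝓝 0) := by
    simpa using hgrowth.inv_tendsto_atTop.const_mul (M * z₀ ^ γ)
  have hratio : ∀ z ω, 0 ≤ G (z / Y ω) / G z := fun z ω =>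
    div_nonneg (hGpos _).le (hGpos z).le
  refine tendsto_of_tendsto_of_tendsto_of_le_of_le' tendsto_const_nhds hbound
    (Eventually.of_forall fun z => integral_nonneg fun ω => Set.indicator_nonneg
      (fun ω _ => hratio z ω) ω) ?_
  filter_upwards [eventually_gt_atTop 0] with z hz
  have hset : {ω | z₀ * Y ω ≤ z}ᶜ = {ω | z / z₀ < Y ω} := by
    ext ω; simp [div_lt_iff₀ hz₀, mul_comm]
  have hmeas : MeasurableSet {ω | z / z₀ < Y ω} := measurableSet_lt measurable_const hY
  rw [hset]
  calc ∫ ω, {ω | z / z₀ < Y ω}.indicator (fun ω => G (z / Y ω) / G z) ω ∂μ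
      ≤ ∫ ω, {ω | z / z₀ < Y ω}.indicator (fun _ => (G z)⁻¹) ω ∂μ := by
        refine integral_mono_of_nonneg (Eventually.of_forall fun ω => Set.indicator_nonneg
          (fun ω _ => hratio z ω) ω) ((integrable_const _).indicator hmeas)
          (Eventually.of_forall fun ω => Set.indicator_le_indicator
            ((div_le_div_of_nonneg_right (hG₁ _) (hGpos z).le).trans_eq (one_div _)))
    _ = μ.real {ω | z / z₀ < Y ω} * (G z)⁻¹ := by
        rw [integral_indicator_const _ hmeas, smul_eq_mul]
    _ ≤ M / (z / z₀) ^ γ * (G z)⁻¹ := by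
        refine mul_le_mul_of_nonneg_right ?_ (inv_nonneg.2 (hGpos z).le)
        exact measureReal_lt_le_integral_rpow_div (fun ω => (hYpos ω).le) hγ
          (div_pos hz hz₀) hYγ
    _ = M * z₀ ^ γ * (z ^ γ * G z)⁻¹ := by
        have := hGpos z
        rw [Real.div_rpow hz.le hz₀.le]
        field_simp

theorem tendsto_integral_div_of_regularlyVarying (hY : Measurable Y) (hYpos : ∀ ω, 0 < Y ω)
    (hG : Antitone G) (hGpos : ∀ x, 0 < G x) (hG₁ : ∀ x, G x ≤ 1)
    (hf : RegularlyVarying G (-α)) (hα : 0 ≤ α) (hαγ : α < γ)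
    (hYγ : Integrable (fun ω => Y ω ^ γ) μ) :
    Tendsto (fun z => ∫ ω, G (z / Y ω) / G z ∂μ) atTop (𝓝 (∫ ω, Y ω ^ α ∂μ)) := by
  obtain ⟨z₀, hz₀, hpotter⟩ :=
    hf.exists_potter_bound (β := (α + γ) / 2) hG hGpos (by linarith) (by linarith)
  have hgrowth := tendsto_rpow_mul_atTop_of_potter_bound (γ := γ) hz₀ (hGpos z₀) (by linarith)
    hpotter
  have hYβ := integrable_rpow_of_le (γ := (α + γ) / 2) hY (fun ω => (hYpos ω).le)
    (by linarith) (by linarith) hYγ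
  have hint : ∀ z, Integrable (fun ω => G (z / Y ω) / G z) μ := fun z =>
    .of_bound ((hG.measurable.comp (measurable_const.div hY)).div_const _).aestronglyMeasurable
      (G z)⁻¹ (Eventually.of_forall fun ω => by
        rw [Real.norm_of_nonneg (div_nonneg (hGpos _).le (hGpos z).le), ← one_div]
        exact div_le_div_of_nonneg_right (hG₁ _) (hGpos z).le)
  have hmeas : ∀ z, MeasurableSet {ω | z₀ * Y ω ≤ z} := fun z =>
    measurableSet_le (by fun_prop) measurable_const
  have hsum := (tendsto_integral_indicator_le_div hY hYpos hG hGpos hf hYβ hpotter).add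
    (tendsto_integral_indicator_compl_le_div hY hYpos hGpos hG₁ (by linarith) hYγ hz₀ hgrowth)
  rw [add_zero] at hsum
  refine hsum.congr fun z => ?_
  rw [← integral_add ((hint z).indicator (hmeas z)) ((hint z).indicator (hmeas z).compl)]
  simp only [Set.indicator_self_add_compl_apply]

theorem ProbabilityTheory.IndepFun.measureReal_lt_mul_eq_integral {X : Ω → ℝ}
    (hXY : IndepFun X Y μ) (hX : Measurable X) (hY : Measurable Y) (hYpos : ∀ ω, 0 < Y ω)
    (z : ℝ) : μ.real {ω | z < X ω * Y ω} = ∫ ω, μ.real {ω' | z / Y ω < X ω'} ∂μ := by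
  set S := {p : ℝ × ℝ | z < p.1 * p.2}
  have hS : MeasurableSet S := measurableSet_lt measurable_const (by fun_prop)
  have hslice : ∀ ω, μ.map X ((fun x => (x, Y ω)) ⁻¹' S) = μ {ω' | z / Y ω < X ω'} := by
    intro ω
    rw [Measure.map_apply hX (measurable_prodMk_right hS)]
    congr 1
    ext ω'
    simp [S, div_lt_iff₀ (hYpos ω)]
  have hsection : Measurable fun y => μ.map X ((fun x => (x, y)) ⁻¹' S) :=
    measurable_measure_prodMk_right hS
  have hlint : μ {ω | z < X ω * Y ω} = ∫⁻ ω, μ {ω' | z / Y ω < X ω'} ∂μ := calc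
    μ {ω | z < X ω * Y ω} = μ.map (fun ω => (X ω, Y ω)) S :=
      (Measure.map_apply (hX.prodMk hY) hS).symm
    _ = (μ.map X).prod (μ.map Y) S := by
      rw [(indepFun_iff_map_prod_eq_prod_map_map hX.aemeasurable hY.aemeasurable).1 hXY]
    _ = ∫⁻ y, μ.map X ((fun x => (x, y)) ⁻¹' S) ∂(μ.map Y) := Measure.prod_apply_symm hS
    _ = ∫⁻ ω, μ {ω' | z / Y ω < X ω'} ∂μ := by
      rw [lintegral_map hsection hY]
      exact lintegral_congr hslice
  rw [measureReal_def, hlint, ← integral_toReal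
    ((hsection.comp hY).aemeasurable.congr (Eventually.of_forall hslice))
    (Eventually.of_forall fun _ => measure_lt_top μ _)]
  rfl

end

theorem breiman_lemma_general
    {Ω : Type*} [MeasurableSpace Ω] (μ : Measure Ω) [IsProbabilityMeasure μ]
    (X Y : Ω → ℝ) (ℓ : ℝ → ℝ) (α ε : ℝ) (hα : 0 < α) (hε : 0 < ε)
    (hXmeas : Measurable X) (hYmeas : Measurable Y)
    (hYpos : ∀ ω, 0 < Y ω)
    (hℓ_slow : ∀ c : ℝ, 0 < c → Tendsto (fun t => ℓ (c * t) / ℓ t) atTop (𝓝 1))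
    (hXtail : Tendsto
      (fun x : ℝ => (μ {ω | x < X ω}).toReal / (ℓ x * x ^ (-α))) atTop (𝓝 1))
    (hindep : IndepFun X Y μ)
    (hmom : Integrable (fun ω => Y ω ^ (α + ε)) μ) :
    Tendsto (fun z : ℝ =>
      (μ {ω | z < X ω * Y ω}).toReal / ((∫ ω, Y ω ^ α ∂μ) * ℓ z * z ^ (-α)))
      atTop (𝓝 1) := by
  set G : ℝ → ℝ := fun x => μ.real {ω | x < X ω}
  have hG : Antitone G := fun a b hab => measureReal_mono fun ω (h : b < X ω) => hab.trans_lt h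
  have hGℓ : RegularlyVarying G (-α) := by
    have hℓ : RegularlyVarying ℓ 0 := fun c hc => by simpa using hℓ_slow c hc
    have := (hℓ.mul_rpow (-α)).of_tendsto_div hXtail
    rwa [zero_add] at this
  have hGpos : ∀ x, 0 < G x := by
    intro x
    obtain ⟨x', hx', hxx'⟩ :=
      ((hXtail.eventually_ne one_ne_zero).and (eventually_ge_atTop x)).exists
    exact (measureReal_nonneg.lt_of_ne (div_ne_zero_iff.1 hx').1.symm).trans_le (hG hxx')
  have hI : 0 < ∫ ω, Y ω ^ α ∂μ := by
    refine (integral_pos_iff_support_of_nonneg (fun ω => (Real.rpow_pos_of_pos (hYpos ω) α).le)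
      (integrable_rpow_of_le hYmeas (fun ω => (hYpos ω).le) hα.le (by linarith) hmom)).2 ?_
    simp [Function.support, (Real.rpow_pos_of_pos (hYpos _) α).ne']
  have hlim := tendsto_integral_div_of_regularlyVarying hYmeas hYpos hG hGpos
    (fun _ => measureReal_le_one) hGℓ hα.le (by linarith : α < α + ε) hmom
  have hprod := (hlim.div_const (∫ ω, Y ω ^ α ∂μ)).mul hXtail
  rw [div_self hI.ne', one_mul] at hprod
  refine hprod.congr fun z => ?_
  rw [integral_div, ← hindep.measureReal_lt_mul_eq_integral hXmeas hYmeas hYpos z]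
  have := hGpos z
  simp only [G, measureReal_def] at this ⊢
  field_simp

/-- Breiman's lemma: if 1 − F_X(x) ~ ℓ(x) x^{-α} with ℓ slowly varying and α > 0, and
Y > 0 is independent of X with E(Y^{α+ε}) < ∞, then Z = XY satisfies
1 − F_Z(z) ~ E(Y^α) ℓ(z) z^{-α}. -/
theorem breiman_lemma
    {Ω : Type*} [MeasurableSpace Ω] (μ : Measure Ω) [IsProbabilityMeasure μ]
    (X Y : Ω → ℝ) (ℓ : ℝ → ℝ) (α ε : ℝ) (hα : 0 < α) (hε : 0 < ε)
    (hXmeas : Measurable X) (hYmeas : Measurable Y)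
    (hXnonneg : ∀ ω, 0 ≤ X ω) (hYpos : ∀ ω, 0 < Y ω)
    (hℓpos : ∀ x : ℝ, 0 < x → 0 < ℓ x)
    (hℓ_slow : ∀ c : ℝ, 0 < c → Tendsto (fun t => ℓ (c * t) / ℓ t) atTop (𝓝 1))
    (hXtail : Tendsto
      (fun x : ℝ => (μ {ω | x < X ω}).toReal / (ℓ x * x ^ (-α))) atTop (𝓝 1))
    (hindep : IndepFun X Y μ)
    (hmom : Integrable (fun ω => Y ω ^ (α + ε)) μ) :
    Tendsto (fun z : ℝ =>
      (μ {ω | z < X ω * Y ω}).toReal / ((∫ ω, Y ω ^ α ∂μ) * ℓ z * z ^ (-α)))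
      atTop (𝓝 1) :=
  breiman_lemma_general μ X Y ℓ α ε hα hε hXmeas hYmeas hYpos hℓ_slow hXtail hindep hmom
end
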